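/- arXiv:0907.1592 — 8 statements merged into one kernel-verified Lean document; each statement's English description precedes it below -/
import Mathlib

section
/- The number of K-classes of a finite cyclic group of order 2^m (m ≥ 1) equals m+1 when K = Q; when K is a finite field of order q with q ≡ 3 (mod 8) and m ≥ 2, the number of K-classes equals 2m−1. -/
set_option linter.dupNamespace false

namespace CardClassesAux

lemma odd_q {q : ℕ} (hq : q % 8 = 3) : Odd q := by
  rw [Nat.odd_iff]; omega

lemma pow_mod8 {q : ℕ} (hq : q % 8 = 3) (j : ℕ) : q ^ j % 8 = 1 ∨ q ^ j % 8 = 3 := by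
  induction j with
  | zero => left; rfl
  | succ j ih =>
    rw [pow_succ, Nat.mul_mod]
    rcases ih with h | h <;> rw [h, hq] <;> decide

lemma not_eight_dvd {q : ℕ} (hq : q % 8 = 3) (j : ℕ) : ¬ (8:ℤ) ∣ (q:ℤ)^j + 1 := by
  intro h
  have h8 := pow_mod8 hq j
  have hcast : ((q ^ j : ℕ) : ℤ) = (q:ℤ)^j := by push_cast; ring
  obtain ⟨c, hc⟩ := h
  rw [← hcast] at hc
  omega

lemma key_pow {q : ℕ} (hq : q % 8 = 3) :
    ∀ i : ℕ, (2:ℤ)^(i+4) ∣ (q:ℤ)^(2^(i+1)) - (1 + 2^(i+3)) := by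
  intro i
  induction i with
  | zero =>
    obtain ⟨c, hc⟩ : ∃ c:ℕ, q = 8*c + 3 := ⟨q/8, by omega⟩
    refine ⟨4*(c:ℤ)^2 + 3*c, ?_⟩
    have hcz : (q:ℤ) = 8*(c:ℤ)+3 := by exact_mod_cast congrArg (Nat.cast : ℕ → ℤ) hc
    rw [hcz]
    norm_num
    ring
  | succ i ih =>
    obtain ⟨d, hd⟩ := ih
    refine ⟨2^(i+1) + d + 2^(i+3)*d + 2^(i+3)*d^2, ?_⟩
    have hsplit : (2:ℕ)^(i+1+1) = 2^(i+1) * 2 := by rw [pow_succ]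
    rw [hsplit, pow_mul]
    linear_combination ((q:ℤ)^(2^(i+1)) + 1 + 2^(i+3) + 2^(i+4)*d) * hd

lemma exp_eq (m : ℕ) {k l : ℕ} (r : ℤ) (hr : Odd r) (hk : k ≤ m) (hl : l ≤ m)
    (h : (2:ℤ)^m ∣ 2^k - r * 2^l) : k = l := by
  by_contra hne
  rcases lt_or_gt_of_ne hne with hkl | hkl
  · have h1 : (2:ℤ)^(k+1) ∣ 2^k - r*2^l := (pow_dvd_pow 2 (by omega)).trans h
    have h2 : (2:ℤ)^(k+1) ∣ r * 2^l := Dvd.dvd.mul_left (pow_dvd_pow 2 (by omega)) r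
    have h3 : (2:ℤ)^(k+1) ∣ 2^k := by
      have := dvd_add h1 h2
      simpa using this
    have h4 := Int.le_of_dvd (by positivity) h3
    have h5 : (2:ℤ)^k < 2^(k+1) := by
      exact pow_lt_pow_right₀ (by norm_num) (Nat.lt_succ_self k)
    linarith
  · have h1 : (2:ℤ)^(l+1) ∣ 2^k - r*2^l := (pow_dvd_pow 2 (by omega)).trans h
    have h2 : (2:ℤ)^(l+1) ∣ (2:ℤ)^k := pow_dvd_pow 2 (by omega)
    have h3 : (2:ℤ)^(l+1) ∣ r * 2^l := by
      have := dvd_sub h2 h1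
      simpa using this
    rw [pow_succ] at h3
    obtain ⟨t, ht⟩ := hr
    have h5 : (2:ℤ)^l ≠ 0 := by positivity
    have h6 : (2:ℤ) ∣ r := by
      have h7 : (2:ℤ)^l * 2 ∣ (2:ℤ)^l * r := by
        have e : r * 2^l = (2:ℤ)^l * r := by ring
        rwa [e] at h3
      exact (mul_dvd_mul_iff_left h5).mp h7
    omega

lemma cover {q : ℕ} (hq : q % 8 = 3) :
    ∀ (s : ℕ) (r : ℤ), Odd r → ∃ j : ℕ, (2:ℤ)^s ∣ r - (q:ℤ)^j ∨ (2:ℤ)^s ∣ r + (q:ℤ)^j := by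
  have hqz : (q:ℤ) % 8 = 3 := by omega
  have main : ∀ (i : ℕ) (r : ℤ), Odd r →
      ∃ j : ℕ, (2:ℤ)^(i+3) ∣ r - (q:ℤ)^j ∨ (2:ℤ)^(i+3) ∣ r + (q:ℤ)^j := by
    intro i
    induction i with
    | zero =>
      intro r hr
      obtain ⟨t, rfl⟩ := hr
      have h8 : (2*t+1) % 8 = 1 ∨ (2*t+1)%8 = 3 ∨ (2*t+1)%8 = 5 ∨ (2*t+1)%8 = 7 := by omega
      rcases h8 with h|h|h|h
      · refine ⟨0, Or.inl ?_⟩; norm_num; omega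
      · refine ⟨1, Or.inl ?_⟩; norm_num; omega
      · refine ⟨1, Or.inr ?_⟩; norm_num; omega
      · refine ⟨0, Or.inr ?_⟩; norm_num; omega
    | succ i ih =>
      intro r hr
      obtain ⟨j, hj⟩ := ih r hr
      obtain ⟨d, hd⟩ := key_pow hq i
      have hqj : Odd ((q:ℤ)^j) := (Int.odd_coe_nat q |>.mpr (odd_q hq)).pow
      obtain ⟨v, hv⟩ := hqj
      rcases hj with hj | hj <;> obtain ⟨t, ht⟩ := hj
      · rcases Int.even_or_odd t with ⟨u, hu⟩ | ⟨u, hu⟩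
        · refine ⟨j, Or.inl ⟨u, ?_⟩⟩
          rw [ht, hu]; ring
        · refine ⟨j + 2^(i+1), Or.inl ⟨u - v - (q:ℤ)^j * d, ?_⟩⟩
          have hpow : (q:ℤ)^(j + 2^(i+1)) = (q:ℤ)^j * (q:ℤ)^(2^(i+1)) := by rw [pow_add]
          rw [hpow]
          linear_combination ht + 2^(i+3)*hu - (q:ℤ)^j*hd - 2^(i+3)*hv
      · rcases Int.even_or_odd t with ⟨u, hu⟩ | ⟨u, hu⟩
        · refine ⟨j, Or.inr ⟨u, ?_⟩⟩
          rw [ht, hu]; ring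
        · refine ⟨j + 2^(i+1), Or.inr ⟨u + v + 1 + (q:ℤ)^j * d, ?_⟩⟩
          have hpow : (q:ℤ)^(j + 2^(i+1)) = (q:ℤ)^j * (q:ℤ)^(2^(i+1)) := by rw [pow_add]
          rw [hpow]
          linear_combination ht + 2^(i+3)*hu + (q:ℤ)^j*hd + 2^(i+3)*hv
  intro s r hr
  rcases Nat.le_total s 3 with hs | hs
  · obtain ⟨j, hj⟩ := main 0 r hr
    exact ⟨j, hj.imp (fun h => dvd_trans (pow_dvd_pow 2 (by omega)) h)
      (fun h => dvd_trans (pow_dvd_pow 2 (by omega)) h)⟩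
  · obtain ⟨j, hj⟩ := main (s-3) r hr
    have hs3 : s - 3 + 3 = s := by omega
    rw [hs3] at hj
    exact ⟨j, hj⟩

lemma coprime_two_pow {c : ℕ} (hc : Odd c) (m : ℕ) : Nat.Coprime c (2^m) :=
  Nat.Coprime.pow_right _ (Nat.coprime_two_right.mpr hc)

lemma cast_pow_totient_eq_one {m c : ℕ} (hc : Odd c) :
    ((c : ZMod (2^m)))^(Nat.totient (2^m)) = 1 := by
  have h := Nat.ModEq.pow_totient (coprime_two_pow hc m)
  have h2 := (ZMod.natCast_eq_natCast_iff _ _ _).mpr h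
  push_cast at h2
  simpa using h2

lemma odd_inv (m : ℕ) {c : ℕ} (hc : Odd c) :
    ∃ s : ℕ, Odd s ∧ (c : ZMod (2^m)) * (s : ZMod (2^m)) = 1 := by
  refine ⟨c ^ (Nat.totient (2^m) - 1), hc.pow, ?_⟩
  have h1 : 1 ≤ Nat.totient (2^m) := Nat.totient_pos.mpr (by positivity)
  push_cast
  rw [← pow_succ']
  have he : Nat.totient (2^m) - 1 + 1 = Nat.totient (2^m) := by omega
  rw [he]
  exact cast_pow_totient_eq_one hc

lemma int_eq_iff (m : ℕ) (x y : ℤ) :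
    ((x : ZMod (2^m)) = (y : ZMod (2^m))) ↔ (2:ℤ)^m ∣ y - x := by
  rw [ZMod.intCast_eq_intCast_iff, Int.modEq_iff_dvd]
  constructor <;> intro h <;> [skip; skip] <;> exact_mod_cast h

def S1 (m x : ℕ) : Set (ZMod (2^m)) := {b | ∃ r : ℕ, Odd r ∧ b = r • ((x : ℕ) : ZMod (2^m))}
def T (m q : ℕ) (x : ℤ) : Set (ZMod (2^m)) := {b | ∃ j : ℕ, b = q ^ j • ((x : ℤ) : ZMod (2^m))}

lemma mem_S1 {m x : ℕ} {b : ZMod (2^m)} :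
    b ∈ S1 m x ↔ ∃ r : ℕ, Odd r ∧ b = (((r : ℤ) * x : ℤ) : ZMod (2^m)) := by
  have key : ∀ r : ℕ, r • ((x:ℕ) : ZMod (2^m)) = (((r:ℤ) * x :ℤ) : ZMod (2^m)) := by
    intro r; rw [nsmul_eq_mul]; push_cast; ring
  unfold S1
  simp only [Set.mem_setOf_eq, key]

lemma mem_T {m q : ℕ} {x : ℤ} {b : ZMod (2^m)} :
    b ∈ T m q x ↔ ∃ j : ℕ, b = (((q:ℤ)^j * x : ℤ) : ZMod (2^m)) := by
  have key : ∀ j : ℕ, q^j • ((x : ℤ) : ZMod (2^m)) = (((q:ℤ)^j * x : ℤ) : ZMod (2^m)) := by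
    intro j; rw [nsmul_eq_mul]; push_cast; ring
  unfold T
  simp only [Set.mem_setOf_eq, key]

lemma S1_rep {m : ℕ} (a : ZMod (2^m)) {r x : ℕ} (hr : Odd r)
    (ha : a = ((r * x : ℕ) : ZMod (2^m))) :
    {b | ∃ r' : ℕ, Odd r' ∧ b = r' • a} = S1 m x := by
  obtain ⟨s, hs, hinv⟩ := odd_inv m hr
  ext b
  simp only [Set.mem_setOf_eq]
  constructor
  · rintro ⟨r', hr', rfl⟩
    rw [mem_S1]
    refine ⟨r' * r, hr'.mul hr, ?_⟩
    rw [ha, nsmul_eq_mul]; push_cast; ring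
  · intro hb
    rw [mem_S1] at hb
    obtain ⟨r', hr', rfl⟩ := hb
    refine ⟨r' * s, hr'.mul hs, ?_⟩
    rw [ha, nsmul_eq_mul]
    push_cast
    rw [show ((r':ZMod (2^m)) * s * ((r:ZMod (2^m)) * x)) = r' * x * ((r:ZMod (2^m)) * s) from by ring,
      hinv, mul_one]

lemma T_rep {m q : ℕ} (hq : Odd q) (a : ZMod (2^m)) {j0 : ℕ} {x : ℤ}
    (ha : a = (((q:ℤ)^j0 * x : ℤ) : ZMod (2^m))) :
    {b | ∃ j : ℕ, b = q ^ j • a} = T m q x := by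
  have hqt : ((q : ZMod (2^m)))^(Nat.totient (2^m)) = 1 := cast_pow_totient_eq_one hq
  ext b
  simp only [Set.mem_setOf_eq]
  constructor
  · rintro ⟨j, rfl⟩
    rw [mem_T]
    exact ⟨j + j0, by rw [ha, nsmul_eq_mul]; push_cast; ring⟩
  · intro hb
    rw [mem_T] at hb
    obtain ⟨j, rfl⟩ := hb
    refine ⟨j + j0 * (Nat.totient (2^m) - 1), ?_⟩
    rw [ha, nsmul_eq_mul]
    push_cast
    have h1 : 1 ≤ Nat.totient (2^m) := Nat.totient_pos.mpr (by positivity)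
    have hkey : (q:ZMod (2^m))^(j + j0*(Nat.totient (2^m) - 1)) * ((q:ZMod (2^m))^(j0))
        = (q:ZMod (2^m))^j := by
      rw [← pow_add]
      have ht' : Nat.totient (2^m) = Nat.totient (2^m) - 1 + 1 := by omega
      have he : j + j0 * (Nat.totient (2^m) - 1) + j0 = j + j0 * Nat.totient (2^m) := by
        nth_rewrite 2 [ht']; ring
      rw [he, pow_add, mul_comm j0, pow_mul, hqt, one_pow, mul_one]
    rw [← mul_assoc, hkey]

lemma decomp (m : ℕ) (a : ZMod (2^m)) :
    ∃ k ≤ m, ∃ r : ℕ, Odd r ∧ a = ((r * 2^k : ℕ) : ZMod (2^m)) := by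
  haveI : NeZero ((2:ℕ)^m) := ⟨by positivity⟩
  have ha : ((a.val : ℕ) : ZMod (2^m)) = a := ZMod.natCast_rightInverse a
  rcases eq_or_ne a.val 0 with h0 | h0
  · refine ⟨m, le_rfl, 1, odd_one, ?_⟩
    rw [← ha, h0]
    simp [ZMod.natCast_self]
  · set k := (a.val).factorization 2 with hkdef
    have hd : 2^k ∣ a.val := Nat.ordProj_dvd _ _
    set r := a.val / 2^k with hrdef
    have hval : a.val = 2^k * r := (Nat.ordProj_mul_ordCompl_eq_self a.val 2).symm
    have hodd : Odd r := by
      have hnd : ¬ 2 ∣ r := Nat.not_dvd_ordCompl Nat.prime_two h0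
      rw [Nat.odd_iff]; omega
    have hklem : k ≤ m := by
      have h1 : 2^k ≤ a.val := Nat.le_of_dvd (Nat.pos_of_ne_zero h0) hd
      have h2 : a.val < 2^m := ZMod.val_lt a
      have h3 : (2:ℕ)^k < 2^m := lt_of_le_of_lt h1 h2
      exact ((Nat.pow_lt_pow_iff_right (by norm_num)).mp h3).le
    refine ⟨k, hklem, r, hodd, ?_⟩
    rw [← ha, hval, Nat.mul_comm]

end CardClassesAux

/-- The number of `K`-classes of a finite cyclic group of order `2^m` (`m ≥ 1`) equals
`m + 1` when `K = ℚ` (classes are the orbits under the odd power maps), and when `K` is a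
finite field of order `q ≡ 3 (mod 8)` and `m ≥ 2`, the number of `K`-classes (orbits under
the maps `a ↦ q^j • a`) equals `2m - 1`.  Here the cyclic group of order `2^m` is realized
additively as `ZMod (2^m)`. -/
theorem card_classes_cyclic_two_group (m : ℕ) (hm : 1 ≤ m) (q : ℕ) (hq : q % 8 = 3) :
    Set.ncard {S : Set (ZMod (2 ^ m)) |
        ∃ a : ZMod (2 ^ m), S = {b | ∃ r : ℕ, Odd r ∧ b = r • a}} = m + 1 ∧
    (2 ≤ m →
      Set.ncard {S : Set (ZMod (2 ^ m)) |
          ∃ a : ZMod (2 ^ m), S = {b | ∃ j : ℕ, b = q ^ j • a}} = 2 * m - 1) := by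
  open CardClassesAux in
  constructor
  · -- Part 1
    have hset : {S : Set (ZMod (2^m)) | ∃ a, S = {b | ∃ r : ℕ, Odd r ∧ b = r • a}}
        = (fun k => S1 m (2^k)) '' Set.Iic m := by
      ext S
      simp only [Set.mem_setOf_eq, Set.mem_image, Set.mem_Iic]
      constructor
      · rintro ⟨a, rfl⟩
        obtain ⟨k, hk, r, hr, ha⟩ := decomp m a
        exact ⟨k, hk, (S1_rep a hr ha).symm⟩
      · rintro ⟨k, hk, rfl⟩
        exact ⟨((2^k : ℕ) : ZMod (2^m)), rfl⟩
    have hinj : Set.InjOn (fun k => S1 m (2^k)) (Set.Iic m) := by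
      intro k hk l hl h
      simp only [Set.mem_Iic] at hk hl
      simp only at h
      have hmem : (((2:ℤ)^k : ℤ) : ZMod (2^m)) ∈ S1 m (2^k) := by
        rw [mem_S1]
        exact ⟨1, odd_one, by push_cast; ring_nf⟩
      rw [h, mem_S1] at hmem
      obtain ⟨r, hr, heq⟩ := hmem
      rw [int_eq_iff] at heq
      refine exp_eq m (r:ℤ) (Int.odd_coe_nat r |>.mpr hr) hk hl ?_
      have e : (2:ℤ)^k - (r:ℤ) * 2^l = -((r:ℤ) * 2^l - 2^k) := by ring
      rw [e]
      exact dvd_neg.mpr (by exact_mod_cast heq)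
    rw [hset, Set.ncard_image_of_injOn hinj, ← Finset.coe_Iic, Set.ncard_coe_finset,
      Nat.card_Iic]
  · -- Part 2
    intro hm2
    have hqodd := odd_q hq
    have hqoddZ : Odd ((q:ℤ)) := Int.odd_coe_nat q |>.mpr hqodd
    -- distinctness of the plus and minus families
    have Tne : ∀ k l : ℕ, k ≤ m → l < m - 2 → T m q ((2:ℤ)^k) ≠ T m q (-((2:ℤ)^l)) := by
      intro k l hk hl hEq
      have hmem : ((-(2^l) : ℤ) : ZMod (2^m)) ∈ T m q (-((2:ℤ)^l)) := by
        rw [mem_T]; exact ⟨0, by norm_num⟩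
      rw [← hEq, mem_T] at hmem
      obtain ⟨j, hj⟩ := hmem
      rw [int_eq_iff] at hj
      have hkl : l = k := by
        refine exp_eq m (-((q:ℤ)^j)) ((hqoddZ.pow).neg) (by omega) hk ?_
        have e : (2:ℤ)^l - (-((q:ℤ)^j)) * 2^k = ((q:ℤ)^j * 2^k - -(2^l)) := by ring
        rw [e]; exact hj
      subst hkl
      have h8 : (8:ℤ) ∣ (q:ℤ)^j + 1 := by
        have hsplit : (2:ℤ)^m = 2^l * 2^(m-l) := by
          rw [← pow_add]; congr 1; omega
        rw [hsplit] at hj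
        have h2 : (2:ℤ)^l * 2^(m-l) ∣ 2^l * ((q:ℤ)^j + 1) := by
          have e : (2:ℤ)^l * ((q:ℤ)^j + 1) = (q:ℤ)^j * 2^l - -(2^l) := by ring
          rw [e]; exact hj
        have h3 : (2:ℤ)^(m-l) ∣ (q:ℤ)^j + 1 :=
          (mul_dvd_mul_iff_left (by positivity : (2:ℤ)^l ≠ 0)).mp h2
        have h4 : (8:ℤ) = 2^3 := by norm_num
        rw [h4]
        exact dvd_trans (pow_dvd_pow 2 (by omega)) h3
      exact not_eight_dvd hq j h8
    -- the set equality
    have hset : {S : Set (ZMod (2^m)) | ∃ a, S = {b | ∃ j : ℕ, b = q ^ j • a}}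
        = (fun k => T m q ((2:ℤ)^k)) '' Set.Iic m
          ∪ (fun k => T m q (-((2:ℤ)^k))) '' Set.Iio (m-2) := by
      ext S
      simp only [Set.mem_setOf_eq, Set.mem_union, Set.mem_image, Set.mem_Iic, Set.mem_Iio]
      constructor
      · rintro ⟨a, rfl⟩
        obtain ⟨k, hk, r, hr, ha⟩ := decomp m a
        have haz : a = (((r:ℤ) * 2^k : ℤ) : ZMod (2^m)) := by
          rw [ha]; push_cast; ring_nf
        have hsplit : (2:ℤ)^m = 2^(m-k) * 2^k := by
          rw [← pow_add]; congr 1; omega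
        obtain ⟨j, hj | hj⟩ := cover hq (m - k) (r:ℤ) (Int.odd_coe_nat r |>.mpr hr)
        · left
          refine ⟨k, hk, ?_⟩
          have ha' : a = (((q:ℤ)^j * 2^k : ℤ) : ZMod (2^m)) := by
            rw [haz, int_eq_iff, hsplit]
            obtain ⟨c, hc⟩ := hj
            exact ⟨-c, by linear_combination (-(2:ℤ)^k) * hc⟩
          exact (T_rep hqodd a ha').symm
        · have ha' : a = (((q:ℤ)^j * (-(2^k)) : ℤ) : ZMod (2^m)) := by
            rw [haz, int_eq_iff, hsplit]
            obtain ⟨c, hc⟩ := hj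
            exact ⟨-c, by linear_combination (-(2:ℤ)^k) * hc⟩
          rcases Nat.lt_or_ge k (m-2) with hk2 | hk2
          · right
            exact ⟨k, hk2, (T_rep hqodd a ha').symm⟩
          · left
            refine ⟨k, hk, ?_⟩
            have h4 : (2:ℤ)^(m-k) ∣ 1 + (q:ℤ) := by
              have h41 : (4:ℤ) ∣ 1 + (q:ℤ) := by omega
              have h42 : (2:ℤ)^(m-k) ∣ 4 := by
                have e4 : (4:ℤ) = 2^2 := by norm_num
                rw [e4]
                exact pow_dvd_pow 2 (by omega)
              exact h42.trans h41
            have hcast : ((-(2^k) : ℤ) : ZMod (2^m)) = (((q:ℤ)^1 * 2^k : ℤ) : ZMod (2^m)) := by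
              rw [int_eq_iff, hsplit]
              obtain ⟨c, hc⟩ := h4
              exact ⟨c, by linear_combination ((2:ℤ)^k) * hc⟩
            have hTT : T m q (-((2:ℤ)^k)) = T m q ((2:ℤ)^k) := T_rep hqodd _ hcast
            exact (hTT ▸ (T_rep hqodd a ha')).symm
      · rintro (⟨k, hk, rfl⟩ | ⟨k, hk, rfl⟩)
        · exact ⟨(((2:ℤ)^k : ℤ) : ZMod (2^m)), rfl⟩
        · exact ⟨((-(2:ℤ)^k : ℤ) : ZMod (2^m)), rfl⟩
    have hinj1 : Set.InjOn (fun k => T m q ((2:ℤ)^k)) (Set.Iic m) := by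
      intro k hk l hl h
      simp only [Set.mem_Iic] at hk hl
      simp only at h
      have hmem : (((2:ℤ)^k : ℤ) : ZMod (2^m)) ∈ T m q ((2:ℤ)^k) := by
        rw [mem_T]; exact ⟨0, by norm_num⟩
      rw [h, mem_T] at hmem
      obtain ⟨j, hj⟩ := hmem
      rw [int_eq_iff] at hj
      refine exp_eq m ((q:ℤ)^j) (hqoddZ.pow) hk hl ?_
      have e : (2:ℤ)^k - (q:ℤ)^j * 2^l = -((q:ℤ)^j * 2^l - 2^k) := by ring
      rw [e]
      exact dvd_neg.mpr hj
    have hinj2 : Set.InjOn (fun k => T m q (-((2:ℤ)^k))) (Set.Iio (m-2)) := by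
      intro k hk l hl h
      simp only [Set.mem_Iio] at hk hl
      simp only at h
      have hmem : ((-(2^k) : ℤ) : ZMod (2^m)) ∈ T m q (-((2:ℤ)^k)) := by
        rw [mem_T]; exact ⟨0, by norm_num⟩
      rw [h, mem_T] at hmem
      obtain ⟨j, hj⟩ := hmem
      rw [int_eq_iff] at hj
      refine exp_eq m ((q:ℤ)^j) (hqoddZ.pow) (by omega) (by omega) ?_
      have e : (2:ℤ)^k - (q:ℤ)^j * 2^l = ((q:ℤ)^j * (-(2^l)) - -(2^k)) := by ring
      rw [e]
      exact hj
    have hdisj : Disjoint ((fun k => T m q ((2:ℤ)^k)) '' Set.Iic m)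
        ((fun k => T m q (-((2:ℤ)^k))) '' Set.Iio (m-2)) := by
      rw [Set.disjoint_left]
      rintro S ⟨k, hk, rfl⟩ ⟨l, hl, hEq⟩
      simp only [Set.mem_Iic] at hk
      simp only [Set.mem_Iio] at hl
      exact Tne k l hk hl hEq.symm
    rw [hset, Set.ncard_union_eq hdisj ((Set.finite_Iic m).image _)
      ((Set.finite_Iio (m-2)).image _),
      Set.ncard_image_of_injOn hinj1, Set.ncard_image_of_injOn hinj2,
      ← Finset.coe_Iic, Set.ncard_coe_finset, Nat.card_Iic,
      ← Finset.coe_Iio, Set.ncard_coe_finset, Nat.card_Iio]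
    omega
end

section
/- Let a have order 2^r with r ≥ 3 in an abelian group, and let q ≡ 3 (mod 8). Then the set of generators of ⟨a⟩ splits into exactly two classes under the relation b ~ a^(q^j), i.e., the Q-class of a splits into exactly two q-classes. -/
/-!
Identify `⟨a⟩` with `ZMod (2 ^ r)` through `x ↦ a ^ x`. The generators of `⟨a⟩` correspond to the
units, and the `q`-class of `a ^ v` to the coset `v • ⟨q⟩` of the subgroup generated by `q`. Hence
the `q`-classes are counted by the index of `⟨q⟩` in `(ZMod (2 ^ r))ˣ`, which is
`2 ^ (r - 1) / 2 ^ (r - 2) = 2`: since `-q ≡ 5 (mod 8)`, the element `-q` has order `2 ^ (r - 2)`,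
and `q` has the same even powers as `-q`.
-/

open Pointwise

theorem ZMod.orderOf_natCast_of_mod_eight_eq_three {q r : ℕ} (hq : q % 8 = 3) (hr : 3 ≤ r) :
    orderOf (q : ZMod (2 ^ r)) = 2 ^ (r - 2) := by
  obtain ⟨n, rfl⟩ := Nat.exists_eq_add_of_le' hr
  obtain ⟨m, rfl⟩ : ∃ m, q = 8 * m + 3 := ⟨q / 8, by omega⟩
  have horder_neg : orderOf (-(8 * m + 3 : ℕ) : ZMod (2 ^ (n + 3))) = 2 ^ (n + 1) := by
    convert ZMod.orderOf_one_add_four_mul (-(2 * m + 1)) (by simp [parity_simps]) (n + 1) using 2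
    push_cast
    ring
  rw [show n + 3 - 2 = n + 1 by omega]
  apply orderOf_eq_prime_pow
  · intro h
    rcases n with _ | n
    · rw [pow_zero, pow_one, ← Nat.cast_one, ZMod.natCast_eq_natCast_iff'] at h
      omega
    · have h_neg : (-(8 * m + 3 : ℕ) : ZMod (2 ^ (n + 1 + 3))) ^ 2 ^ (n + 1) = 1 := by
        rw [(Nat.even_pow.2 ⟨even_two, n.succ_ne_zero⟩).neg_pow, h]
      have := orderOf_dvd_of_pow_eq_one h_neg
      rw [horder_neg, Nat.pow_dvd_pow_iff_le_right (by norm_num)] at this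
      omega
  · rw [← (Nat.even_pow.2 ⟨even_two, n.succ_ne_zero⟩).neg_pow, ← horder_neg, pow_orderOf_eq_one]

theorem ZMod.index_zpowers_eq_two {r : ℕ} (hr : 2 ≤ r) {u : (ZMod (2 ^ r))ˣ}
    (hu : orderOf u = 2 ^ (r - 2)) : (Subgroup.zpowers u).index = 2 := by
  have hcard : Nat.card (ZMod (2 ^ r))ˣ = 2 ^ (r - 2) * 2 := by
    rw [Nat.card_eq_fintype_card, ZMod.card_units_eq_totient,
      Nat.totient_prime_pow Nat.prime_two (by omega), ← pow_succ, show r - 2 + 1 = r - 1 by omega]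
    simp
  rw [← (Subgroup.zpowers u).card_mul_index, Nat.card_zpowers, hu] at hcard
  exact Nat.eq_of_mul_eq_mul_left (by positivity) hcard

theorem Subgroup.ncard_range_image_smul_eq_index {U X : Type*} [Group U] (H : Subgroup U)
    {g : U → X} (hg : Function.Injective g) :
    (Set.range fun u : U => g '' (u • (H : Set U))).ncard = H.index := by
  rw [← Function.comp_def (Set.image g), Set.range_comp,
    Set.ncard_image_of_injective _ (Set.image_injective.2 hg)]
  exact (MulAction.stabilizer_subgroup H ▸ MulAction.index_stabilizer U (H : Set U)).symm

def qClass {G : Type*} [Monoid G] (q : ℕ) (x : G) : Set G := {b | ∃ j : ℕ, b = x ^ q ^ j}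

section PowZModVal

variable {G : Type*} [Monoid G] {a : G} {m : ℕ}

theorem pow_zmod_val_natCast (ha : orderOf a = m) (k : ℕ) : a ^ (k : ZMod m).val = a ^ k := by
  rw [ZMod.val_natCast, ← ha, pow_mod_orderOf]

theorem pow_zmod_val_injective [NeZero m] (ha : orderOf a = m) :
    Function.Injective fun x : ZMod m => a ^ x.val := by
  intro x y hxy
  apply ZMod.val_injective
  refine pow_injOn_Iio_orderOf ?_ ?_ hxy <;> simp [ha, ZMod.val_lt]

theorem image_smul_zpowers_eq_qClass [NeZero m] (ha : orderOf a = m) {q v : ℕ}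
    {u w : (ZMod m)ˣ} (hu : (u : ZMod m) = v) (hw : (w : ZMod m) = q) :
    (fun x : (ZMod m)ˣ => a ^ (x : ZMod m).val) '' (u • (Subgroup.zpowers w : Set (ZMod m)ˣ)) =
      qClass q (a ^ v) := by
  rw [← (isOfFinOrder_of_finite w).powers_eq_zpowers, Submonoid.coe_powers, Set.smul_set_range,
    ← Set.range_comp]
  ext b
  simp only [qClass, Set.mem_ofPred_eq, Set.mem_range, Function.comp_def, eq_comm]
  refine exists_congr fun j => ?_
  rw [smul_eq_mul, Units.val_mul, Units.val_pow_eq_pow_val, hu, hw, ← Nat.cast_pow,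
    ← Nat.cast_mul, pow_zmod_val_natCast ha, pow_mul]

end PowZModVal

/-- Let `a` have order `2^r` with `r ≥ 3` in an abelian group and let `q ≡ 3 (mod 8)`.
Then the set of generators of `⟨a⟩` (the ℚ-class of `a`, i.e. the odd powers of `a`)
splits into exactly two classes under the `q`-th power maps. -/
theorem rat_class_splits_into_two {G : Type*} [CommGroup G] (r : ℕ) (hr : 3 ≤ r)
    (a : G) (ha : orderOf a = 2 ^ r) (q : ℕ) (hq : q % 8 = 3) :
    Set.ncard {S : Set G | ∃ v : ℕ, Odd v ∧ S = {b | ∃ j : ℕ, b = (a ^ v) ^ q ^ j}} = 2 := by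
  change Set.ncard {S : Set G | ∃ v : ℕ, Odd v ∧ S = qClass q (a ^ v)} = 2
  have hodd (v : ℕ) : Odd v ↔ v.Coprime (2 ^ r) := by
    rw [Nat.coprime_pow_right_iff (by omega), Nat.coprime_two_right]
  let w := ZMod.unitOfCoprime q ((hodd q).1 (Nat.odd_iff.2 (by omega)))
  have hw : (w : ZMod (2 ^ r)) = q := ZMod.coe_unitOfCoprime _ _
  let H := Subgroup.zpowers w
  have hindex : H.index = 2 := ZMod.index_zpowers_eq_two (by omega)
    (by rw [← orderOf_units, hw, ZMod.orderOf_natCast_of_mod_eight_eq_three hq hr])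
  let g (x : (ZMod (2 ^ r))ˣ) : G := a ^ (x : ZMod (2 ^ r)).val
  have hg : Function.Injective g := (pow_zmod_val_injective ha).comp Units.val_injective
  have hclasses : {S : Set G | ∃ v : ℕ, Odd v ∧ S = qClass q (a ^ v)} =
      Set.range fun u : (ZMod (2 ^ r))ˣ => g '' (u • (H : Set (ZMod (2 ^ r))ˣ)) := by
    ext S
    constructor
    · rintro ⟨v, hv, rfl⟩
      exact ⟨_, image_smul_zpowers_eq_qClass ha (ZMod.coe_unitOfCoprime v ((hodd v).1 hv)) hw⟩
    · rintro ⟨u, rfl⟩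
      exact ⟨_, (hodd _).2 (ZMod.val_coe_unit_coprime u),
        image_smul_zpowers_eq_qClass ha (ZMod.natCast_zmod_val _).symm hw⟩
  rw [hclasses, Subgroup.ncard_range_image_smul_eq_index _ hg, hindex]
end

section
/- The total number of cyclic subgroups of C_{2^a} × C_{2^b} with a ≥ b ≥ 1 is 2^b(3 + a − b) − 2. -/
/-!
A cyclic subgroup of order `n` has exactly `φ n` generators, so the number of cyclic subgroups
of order `2 ^ (k + 1)` is the number of elements of that order divided by `2 ^ k`. In
`ZMod (2 ^ a) × ZMod (2 ^ b)` exactly `2 ^ min a m * 2 ^ min b m` elements are killed by `2 ^ m`,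
which gives `3 * 2 ^ k` cyclic subgroups of order `2 ^ (k + 1)` for `k < b` and `2 ^ b` of them
for `b ≤ k < a`. Together with the trivial subgroup this sums to
`1 + 3 * (2 ^ b - 1) + (a - b) * 2 ^ b`.
-/

open AddSubgroup Finset

section CyclicSubgroups

open scoped Classical

variable {G : Type*} [AddGroup G] [Fintype G]

variable (G) in
noncomputable def cyclicAddSubgroups : Finset (AddSubgroup G) :=
  univ.image zmultiples

variable (G) in
noncomputable def cyclicAddSubgroupsOfCard (n : ℕ) : Finset (AddSubgroup G) :=
  (cyclicAddSubgroups G).filter fun H : AddSubgroup G => Nat.card H = n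

lemma zmultiples_eq_zmultiples_iff_mem_and_addOrderOf_eq {g h : G} :
    zmultiples h = zmultiples g ↔ h ∈ zmultiples g ∧ addOrderOf h = addOrderOf g := by
  refine ⟨fun hgh => ⟨hgh ▸ mem_zmultiples h, ?_⟩, fun ⟨hmem, hord⟩ => ?_⟩
  · rw [← Nat.card_zmultiples, hgh, Nat.card_zmultiples]
  · refine eq_of_le_of_card_ge (zmultiples_le_of_mem hmem) ?_
    rw [Nat.card_zmultiples, Nat.card_zmultiples, hord]

lemma card_filter_zmultiples_eq_totient (g : G) :
    #{h | zmultiples h = zmultiples g} = Nat.totient (addOrderOf g) := by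
  have hcard : Fintype.card (zmultiples g) = addOrderOf g := by
    rw [← Nat.card_eq_fintype_card, Nat.card_zmultiples]
  rw [← IsAddCyclic.card_addOrderOf_eq_totient (α := zmultiples g) (dvd_of_eq hcard.symm),
    ← card_map (Function.Embedding.subtype _)]
  congr 1
  ext h
  simp only [mem_filter, mem_univ, true_and, mem_map, Function.Embedding.coe_subtype,
    zmultiples_eq_zmultiples_iff_mem_and_addOrderOf_eq]
  exact ⟨fun ⟨hmem, hord⟩ => ⟨⟨h, hmem⟩, by rwa [addOrderOf_mk], rfl⟩,
    fun ⟨x, hord, hx⟩ => hx ▸ ⟨x.2, by rwa [addOrderOf_coe]⟩⟩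

lemma card_cyclicAddSubgroupsOfCard_mul_totient (n : ℕ) :
    #(cyclicAddSubgroupsOfCard G n) * Nat.totient n = #{g : G | addOrderOf g = n} := by
  have himage : (univ.filter fun g : G => addOrderOf g = n).image zmultiples =
      cyclicAddSubgroupsOfCard G n := by
    ext H
    simp only [cyclicAddSubgroupsOfCard, cyclicAddSubgroups, mem_image, mem_filter, mem_univ,
      true_and]
    constructor
    · rintro ⟨g, hg, rfl⟩
      exact ⟨⟨g, rfl⟩, by rw [Nat.card_zmultiples, hg]⟩
    · rintro ⟨⟨g, rfl⟩, hg⟩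
      exact ⟨g, by rwa [Nat.card_zmultiples] at hg, rfl⟩
  rw [card_eq_sum_card_image zmultiples {g : G | addOrderOf g = n}, himage, sum_const_nat]
  intro H hH
  obtain ⟨g₀, hg₀, rfl⟩ := mem_image.mp (himage ▸ hH)
  rw [mem_filter] at hg₀
  rw [← hg₀.2, ← card_filter_zmultiples_eq_totient]
  congr 1
  ext g
  simp [zmultiples_eq_zmultiples_iff_mem_and_addOrderOf_eq]

lemma card_cyclicAddSubgroupsOfCard_one : #(cyclicAddSubgroupsOfCard G 1) = 1 := by
  have h := card_cyclicAddSubgroupsOfCard_mul_totient (G := G) 1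
  rw [Nat.totient_one, mul_one] at h
  rw [h, card_eq_one]
  exact ⟨0, by ext; simp⟩

lemma card_cyclicAddSubgroups_eq_sum {p a : ℕ} (hp : p.Prime)
    (hG : ∀ g : G, addOrderOf g ∣ p ^ a) :
    #(cyclicAddSubgroups G) = ∑ k ∈ range (a + 1), #(cyclicAddSubgroupsOfCard G (p ^ k)) := by
  have hmaps : ∀ H ∈ cyclicAddSubgroups G, Nat.card H ∈ (range (a + 1)).image (p ^ ·) := by
    intro H hH
    obtain ⟨g, -, rfl⟩ := mem_image.mp hH
    obtain ⟨k, hk, hg⟩ := (Nat.dvd_prime_pow hp).mp (hG g)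
    exact mem_image.mpr
      ⟨k, mem_range.mpr (Nat.lt_succ_of_le hk), by rw [Nat.card_zmultiples, hg]⟩
  rw [card_eq_sum_card_fiberwise hmaps,
    sum_image fun i _ j _ h => Nat.pow_right_injective hp.two_le h]
  rfl

end CyclicSubgroups

lemma card_addOrderOf_eq_prime_pow_succ {G : Type*} [AddMonoid G] [Fintype G] [DecidableEq G]
    {p : ℕ} [Fact p.Prime] (k : ℕ) :
    #{g : G | addOrderOf g = p ^ (k + 1)} =
      #{g : G | p ^ (k + 1) • g = 0} - #{g : G | p ^ k • g = 0} := by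
  rw [← card_sdiff_of_subset]
  · congr 1
    ext g
    simp only [mem_filter, mem_univ, true_and, mem_sdiff]
    refine ⟨fun hg => ⟨hg ▸ addOrderOf_nsmul_eq_zero g, fun hk => ?_⟩,
      fun ⟨hsucc, hk⟩ => addOrderOf_eq_prime_pow hk hsucc⟩
    have hdvd := addOrderOf_dvd_of_nsmul_eq_zero hk
    rw [hg, Nat.pow_dvd_pow_iff_le_right (Fact.out : p.Prime).one_lt] at hdvd
    omega
  · intro g
    simp only [mem_filter, mem_univ, true_and]
    intro hg
    rw [pow_succ, mul_nsmul, hg, nsmul_zero]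

lemma ZMod.card_nsmul_eq_zero (n d : ℕ) [NeZero n] : #{x : ZMod n | d • x = 0} = n.gcd d := by
  have hker := IsAddCyclic.card_nsmulAddMonoidHom_ker (ZMod n) d
  rw [Nat.card_zmod] at hker
  rw [← hker, ← Fintype.card_subtype, ← Nat.card_eq_fintype_card]
  rfl

lemma Prod.card_nsmul_eq_zero {A B : Type*} [AddMonoid A] [AddMonoid B] [Fintype A] [Fintype B]
    [DecidableEq A] [DecidableEq B] (d : ℕ) :
    #{x : A × B | d • x = 0} = #{x : A | d • x = 0} * #{y : B | d • y = 0} := by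
  rw [← card_product, ← filter_product, ← univ_product_univ]
  congr 1
  ext x
  simp [Prod.ext_iff]

lemma Nat.gcd_pow_pow (p a m : ℕ) : (p ^ a).gcd (p ^ m) = p ^ min a m := by
  rcases le_total a m with h | h
  · rw [min_eq_left h, Nat.gcd_eq_left (pow_dvd_pow p h)]
  · rw [min_eq_right h, Nat.gcd_eq_right (pow_dvd_pow p h)]

section TwoFactors

variable {a b : ℕ}

lemma addOrderOf_dvd_two_pow (hab : b ≤ a) (g : ZMod (2 ^ a) × ZMod (2 ^ b)) :
    addOrderOf g ∣ 2 ^ a := by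
  have h₁ : addOrderOf g.1 ∣ 2 ^ a := by simpa using addOrderOf_dvd_natCard g.1
  have h₂ : addOrderOf g.2 ∣ 2 ^ b := by simpa using addOrderOf_dvd_natCard g.2
  rw [Prod.addOrderOf]
  exact Nat.lcm_dvd h₁ (h₂.trans (pow_dvd_pow 2 hab))

lemma card_nsmul_two_pow_eq_zero (m : ℕ) :
    #{g : ZMod (2 ^ a) × ZMod (2 ^ b) | 2 ^ m • g = 0} = 2 ^ min a m * 2 ^ min b m := by
  rw [Prod.card_nsmul_eq_zero, ZMod.card_nsmul_eq_zero, ZMod.card_nsmul_eq_zero, Nat.gcd_pow_pow,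
    Nat.gcd_pow_pow]

lemma card_cyclicAddSubgroupsOfCard_two_pow_succ {k : ℕ} (hk : k < a) :
    #(cyclicAddSubgroupsOfCard (ZMod (2 ^ a) × ZMod (2 ^ b)) (2 ^ (k + 1))) =
      if k < b then 3 * 2 ^ k else 2 ^ b := by
  have h := card_cyclicAddSubgroupsOfCard_mul_totient
    (G := ZMod (2 ^ a) × ZMod (2 ^ b)) (2 ^ (k + 1))
  rw [card_addOrderOf_eq_prime_pow_succ, card_nsmul_two_pow_eq_zero, card_nsmul_two_pow_eq_zero,
    Nat.totient_prime_pow_succ Nat.prime_two, Nat.add_one_sub_one, mul_one] at h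
  refine Nat.eq_of_mul_eq_mul_right (pow_pos two_pos k) (h.trans ?_)
  split_ifs with hkb
  · rw [min_eq_right (by omega : k + 1 ≤ a), min_eq_right (by omega : k + 1 ≤ b),
      min_eq_right (by omega : k ≤ a), min_eq_right (by omega : k ≤ b)]
    apply Nat.sub_eq_of_eq_add
    ring
  · rw [min_eq_right (by omega : k + 1 ≤ a), min_eq_left (by omega : b ≤ k + 1),
      min_eq_right (by omega : k ≤ a), min_eq_left (by omega : b ≤ k)]
    apply Nat.sub_eq_of_eq_add
    ring

lemma one_add_sum_range_ite_eq (hab : b ≤ a) :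
    1 + ∑ k ∈ range a, (if k < b then 3 * 2 ^ k else 2 ^ b) = 2 ^ b * (3 + a - b) - 2 := by
  obtain ⟨m, rfl⟩ := Nat.exists_eq_add_of_le hab
  have hlow : ∑ k ∈ range b, (if k < b then 3 * 2 ^ k else 2 ^ b) = 3 * (2 ^ b - 1) := by
    rw [sum_congr rfl fun k hk => if_pos (mem_range.mp hk), ← mul_sum,
      Nat.geomSum_eq le_rfl, Nat.div_one]
  have hhigh : ∑ j ∈ range m, (if b + j < b then 3 * 2 ^ (b + j) else 2 ^ b) = m * 2 ^ b := by
    simp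
  have hpos : 1 ≤ 2 ^ b := Nat.one_le_two_pow
  rw [sum_range_add, hlow, hhigh, show 3 + (b + m) - b = 3 + m by omega, Nat.mul_add, mul_comm m]
  omega

end TwoFactors

theorem total_cyclic_subgroups_two_factors_general (a b : ℕ) (hab : b ≤ a) :
    Set.ncard {H : AddSubgroup (ZMod (2 ^ a) × ZMod (2 ^ b)) |
      ∃ x, H = AddSubgroup.zmultiples x} = 2 ^ b * (3 + a - b) - 2 := by
  have hset : {H : AddSubgroup (ZMod (2 ^ a) × ZMod (2 ^ b)) | ∃ x, H = zmultiples x} =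
      cyclicAddSubgroups (ZMod (2 ^ a) × ZMod (2 ^ b)) := by
    ext H
    simp [cyclicAddSubgroups, eq_comm]
  rw [hset, Set.ncard_coe_finset,
    card_cyclicAddSubgroups_eq_sum Nat.prime_two (addOrderOf_dvd_two_pow hab), sum_range_succ',
    pow_zero, card_cyclicAddSubgroupsOfCard_one, add_comm,
    sum_congr rfl fun k hk => card_cyclicAddSubgroupsOfCard_two_pow_succ (mem_range.mp hk)]
  exact one_add_sum_range_ite_eq hab

/-- The total number of cyclic subgroups of `C_{2^a} × C_{2^b}` with `a ≥ b ≥ 1` is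
`2^b (3 + a - b) - 2`. -/
theorem total_cyclic_subgroups_two_factors (a b : ℕ) (hb : 1 ≤ b) (hab : b ≤ a) :
    Set.ncard {H : AddSubgroup (ZMod (2 ^ a) × ZMod (2 ^ b)) |
      ∃ x, H = AddSubgroup.zmultiples x} = 2 ^ b * (3 + a - b) - 2 :=
  total_cyclic_subgroups_two_factors_general a b hab
end

section
/- Let A = C_{2^a} × C_{2^b} × C_{2^c} with a ≥ b ≥ c ≥ 1. The number of cyclic subgroups of A of order 2^k is 7·2^(2(k−1)) if 1 ≤ k ≤ c, 3·2^(c+k−1) if c < k ≤ b, and 2^(b+c) if b < k ≤ a. -/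
open AddSubgroup

instance myinst {G : Type*} [AddGroup G] (x : G) : IsAddCyclic ↥(zmultiples x) := by
  refine ⟨⟨x, mem_zmultiples x⟩, fun y => ?_⟩
  obtain ⟨y, n, hn⟩ := y
  exact ⟨n, Subtype.ext (by simpa using hn)⟩

lemma countDvd (n k : ℕ) : Nat.card {x : ZMod (2^n) | 2^k • x = 0} = 2 ^ min n k := by
  have hne : (2:ℕ)^n ≠ 0 := by positivity
  haveI : NeZero ((2:ℕ)^n) := ⟨hne⟩
  set j := min n k with hj
  set g : ZMod (2^n) := ((2^(n-j) : ℕ) : ZMod (2^n)) with hg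
  have hordg : addOrderOf g = 2 ^ j := by
    rw [hg, ZMod.addOrderOf_coe _ hne, Nat.gcd_eq_right (pow_dvd_pow 2 (Nat.sub_le n j)),
      Nat.pow_div (Nat.sub_le n j) two_pos, Nat.sub_sub_self (min_le_left n k)]
  have hset : {x : ZMod (2^n) | 2^k • x = 0} = (zmultiples g : Set (ZMod (2^n))) := by
    ext x
    simp only [Set.mem_setOf_eq, SetLike.mem_coe]
    constructor
    · intro hx
      have hdvd : addOrderOf x ∣ 2 ^ k := addOrderOf_dvd_of_nsmul_eq_zero hx
      have hdvd2 : addOrderOf x ∣ 2 ^ n := by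
        have h := addOrderOf_dvd_natCard (G := ZMod (2^n)) x
        rwa [Nat.card_zmod] at h
      have hdj : addOrderOf x ∣ 2 ^ j := by
        rcases le_total n k with h | h
        · rw [hj, min_eq_left h]; exact hdvd2
        · rw [hj, min_eq_right h]; exact hdvd
      have hx' : ((x.val : ℕ) : ZMod (2^n)) = x := ZMod.natCast_rightInverse x
      rw [← hx', ZMod.addOrderOf_coe _ hne] at hdj
      set d := Nat.gcd (2^n) x.val with hd
      have hdd : d ∣ 2 ^ n := Nat.gcd_dvd_left _ _
      have hmul : d * (2^n / d) = 2^n := Nat.mul_div_cancel' hdd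
      have h2 : (2:ℕ)^(n-j) ∣ d := by
        have h3 : (2:ℕ)^n ∣ d * 2^j := hmul ▸ mul_dvd_mul_left d hdj
        have h4 : (2:ℕ)^(n-j) * 2^j ∣ d * 2^j := by
          rwa [← pow_add, Nat.sub_add_cancel (min_le_left n k)]
        exact Nat.dvd_of_mul_dvd_mul_right (pow_pos two_pos j) h4
      obtain ⟨t, ht⟩ : (2:ℕ)^(n-j) ∣ x.val := h2.trans (Nat.gcd_dvd_right _ _)
      refine ⟨(t : ℤ), ?_⟩
      show ((t:ℤ) • g) = x
      rw [← hx', ht, zsmul_eq_mul, hg]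
      push_cast
      ring
    · rintro ⟨t, rfl⟩
      have h0 : (2^k : ℕ) • g = 0 := by
        apply addOrderOf_dvd_iff_nsmul_eq_zero.mp
        rw [hordg]; exact pow_dvd_pow 2 (min_le_right n k)
      rw [smul_comm, h0, smul_zero]
  calc Nat.card {x : ZMod (2^n) | 2^k • x = 0}
      = Nat.card (zmultiples g) := by rw [hset]; rfl
    _ = 2 ^ j := by rw [Nat.card_zmultiples, hordg]

lemma prodCount {A B : Type*} [AddGroup A] [AddGroup B] (m : ℕ) :
    Nat.card {p : A × B | m • p = 0} =
      Nat.card {x : A | m • x = 0} * Nat.card {y : B | m • y = 0} := by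
  rw [← Nat.card_prod]
  apply Nat.card_congr
  refine (Equiv.subtypeEquivRight ?_).trans (Equiv.subtypeProdEquivProd)
  rintro ⟨x, y⟩
  simp [Prod.ext_iff]

lemma splitCount {G : Type*} [AddGroup G] [Fintype G] [DecidableEq G] (k : ℕ) (hk : 1 ≤ k) :
    Nat.card {x : G | 2^k • x = 0} =
      Nat.card {x : G | 2^(k-1) • x = 0} + Nat.card {x : G | addOrderOf x = 2^k} := by
  classical
  have key : ∀ x : G, 2^k • x = 0 ↔ (2^(k-1) • x = 0 ∨ addOrderOf x = 2^k) := by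
    intro x
    rw [← addOrderOf_dvd_iff_nsmul_eq_zero, ← addOrderOf_dvd_iff_nsmul_eq_zero]
    constructor
    · intro h
      obtain ⟨j, hj, hx⟩ := (Nat.dvd_prime_pow Nat.prime_two).mp h
      rcases eq_or_lt_of_le hj with rfl | hlt
      · exact Or.inr hx
      · exact Or.inl (hx ▸ pow_dvd_pow 2 (Nat.le_sub_one_of_lt hlt))
    · rintro (h | h)
      · exact h.trans (pow_dvd_pow 2 (Nat.sub_le k 1))
      · exact h ▸ dvd_rfl
  have hdisj : ∀ x : G, 2^(k-1) • x = 0 → addOrderOf x = 2^k → False := by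
    intro x h1 h2
    have := addOrderOf_dvd_of_nsmul_eq_zero h1
    rw [h2] at this
    have := Nat.le_of_dvd (by positivity) this
    have h3 : (2:ℕ)^(k-1) < 2^k := Nat.pow_lt_pow_right one_lt_two (Nat.sub_lt hk one_pos)
    omega
  simp only [Nat.card_eq_fintype_card, Fintype.card_subtype]
  rw [← Finset.card_union_of_disjoint]
  · congr 1
    ext x
    simp only [Finset.mem_filter, Finset.mem_union, Finset.mem_univ, true_and]
    exact key x
  · rw [Finset.disjoint_filter]
    intro x _ h1 h2
    exact hdisj x h1 h2

lemma fiberCount {G : Type*} [AddCommGroup G] [Fintype G] [DecidableEq G] (k : ℕ) :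
    Nat.card {x : G | addOrderOf x = 2^k} =
      Set.ncard {H : AddSubgroup G | (∃ x, H = zmultiples x) ∧ Nat.card H = 2^k}
        * Nat.totient (2^k) := by
  classical
  set T : Finset G := Finset.univ.filter (fun x => addOrderOf x = 2^k) with hT
  set S : Finset (AddSubgroup G) := T.image (fun x => zmultiples x) with hS
  have hSset : (↑S : Set (AddSubgroup G)) =
      {H : AddSubgroup G | (∃ x, H = zmultiples x) ∧ Nat.card H = 2^k} := by
    ext H
    simp only [hS, Finset.coe_image, Set.mem_image, Finset.mem_coe, hT, Finset.mem_filter,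
      Finset.mem_univ, true_and, Set.mem_setOf_eq]
    constructor
    · rintro ⟨x, hx, rfl⟩
      exact ⟨⟨x, rfl⟩, by rw [Nat.card_zmultiples, hx]⟩
    · rintro ⟨⟨x, rfl⟩, hcard⟩
      rw [Nat.card_zmultiples] at hcard
      exact ⟨x, hcard, rfl⟩
  have hcardT : Nat.card {x : G | addOrderOf x = 2^k} = T.card := by
    rw [Nat.card_eq_fintype_card, Fintype.card_subtype]
    simp [hT]
  have hfib : ∀ H ∈ S, (T.filter (fun x => zmultiples x = H)).card = Nat.totient (2^k) := by
    intro H hH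
    obtain ⟨x0, hx0T, hx0⟩ := Finset.mem_image.mp hH
    rw [hT, Finset.mem_filter] at hx0T
    have hcardH : Nat.card H = 2^k := by
      rw [← hx0, Nat.card_zmultiples, hx0T.2]
    have hmemiff : ∀ x : G, addOrderOf x = 2^k → (zmultiples x = H ↔ x ∈ H) := by
      intro x hx
      constructor
      · rintro rfl; exact mem_zmultiples x
      · intro hxH
        apply AddSubgroup.eq_of_le_of_card_ge ((zmultiples_le).mpr hxH)
        rw [hcardH, Nat.card_zmultiples, hx]
    haveI : IsAddCyclic ↥H := hx0 ▸ myinst x0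
    have htot : (Finset.univ.filter (fun y : ↥H => addOrderOf y = 2^k)).card
        = Nat.totient (2^k) := by
      have hd : 2^k ∣ Fintype.card ↥H := by
        rw [← Nat.card_eq_fintype_card, hcardH]
      simpa using IsAddCyclic.card_addOrderOf_eq_totient (α := ↥H) hd
    rw [← htot]
    apply Finset.card_bij (fun x hx => (⟨x, by
      rw [Finset.mem_filter, hT, Finset.mem_filter] at hx
      exact (hmemiff x hx.1.2).mp hx.2⟩ : ↥H))
    · intro x hx
      rw [Finset.mem_filter, hT, Finset.mem_filter] at hx
      rw [Finset.mem_filter]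
      refine ⟨Finset.mem_univ _, ?_⟩
      rw [← AddSubgroup.addOrderOf_coe]
      exact hx.1.2
    · intro x hx y hy h
      exact congrArg Subtype.val h
    · rintro ⟨y, hyH⟩ hy
      rw [Finset.mem_filter] at hy
      have hord : addOrderOf y = 2^k := by
        rw [← AddSubgroup.addOrderOf_coe] at hy
        exact hy.2
      refine ⟨y, ?_, rfl⟩
      rw [Finset.mem_filter, hT, Finset.mem_filter]
      exact ⟨⟨Finset.mem_univ _, hord⟩, (hmemiff y hord).mpr hyH⟩
  calc Nat.card {x : G | addOrderOf x = 2^k} = T.card := hcardT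
    _ = ∑ H ∈ S, (T.filter (fun x => zmultiples x = H)).card :=
        Finset.card_eq_sum_card_image _ _
    _ = ∑ H ∈ S, Nat.totient (2^k) := Finset.sum_congr rfl hfib
    _ = S.card * Nat.totient (2^k) := by rw [Finset.sum_const, smul_eq_mul]
    _ = _ := by rw [← hSset, Set.ncard_coe_finset]

lemma combinedCount (a b c k : ℕ) (hk : 1 ≤ k) :
    Set.ncard {H : AddSubgroup (ZMod (2 ^ a) × ZMod (2 ^ b) × ZMod (2 ^ c)) |
        (∃ x, H = AddSubgroup.zmultiples x) ∧ Nat.card H = 2 ^ k} * 2^(k-1)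
      + 2^(min a (k-1) + (min b (k-1) + min c (k-1)))
      = 2^(min a k + (min b k + min c k)) := by
  haveI : NeZero ((2:ℕ)^a) := ⟨by positivity⟩
  haveI : NeZero ((2:ℕ)^b) := ⟨by positivity⟩
  haveI : NeZero ((2:ℕ)^c) := ⟨by positivity⟩
  set G := ZMod (2 ^ a) × ZMod (2 ^ b) × ZMod (2 ^ c) with hG
  classical
  have hD : ∀ m : ℕ, Nat.card {x : G | 2^m • x = 0} = 2^(min a m + (min b m + min c m)) := by
    intro m
    rw [prodCount, prodCount, countDvd, countDvd, countDvd, ← pow_add, ← pow_add]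
  have hsplit := splitCount (G := G) k hk
  have hfib := fiberCount (G := G) k
  rw [hD, hD] at hsplit
  rw [hfib] at hsplit
  rw [Nat.totient_prime_pow Nat.prime_two hk] at hsplit
  rw [show 2-1 = 1 from rfl, mul_one] at hsplit
  rw [Nat.add_comm]
  exact hsplit.symm

/-- In `C_{2^a} × C_{2^b} × C_{2^c}` with `a ≥ b ≥ c ≥ 1`, the number of cyclic subgroups
of order `2^k` is `7·2^(2(k-1))` if `1 ≤ k ≤ c`, `3·2^(c+k-1)` if `c < k ≤ b`, and
`2^(b+c)` if `b < k ≤ a`. -/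
theorem count_cyclic_subgroups_three_factors (a b c : ℕ) (hc : 1 ≤ c) (hcb : c ≤ b)
    (hba : b ≤ a) (k : ℕ) :
    (1 ≤ k → k ≤ c →
      Set.ncard {H : AddSubgroup (ZMod (2 ^ a) × ZMod (2 ^ b) × ZMod (2 ^ c)) |
        (∃ x, H = AddSubgroup.zmultiples x) ∧ Nat.card H = 2 ^ k} = 7 * 2 ^ (2 * (k - 1))) ∧
    (c < k → k ≤ b →
      Set.ncard {H : AddSubgroup (ZMod (2 ^ a) × ZMod (2 ^ b) × ZMod (2 ^ c)) |
        (∃ x, H = AddSubgroup.zmultiples x) ∧ Nat.card H = 2 ^ k} = 3 * 2 ^ (c + k - 1)) ∧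
    (b < k → k ≤ a →
      Set.ncard {H : AddSubgroup (ZMod (2 ^ a) × ZMod (2 ^ b) × ZMod (2 ^ c)) |
        (∃ x, H = AddSubgroup.zmultiples x) ∧ Nat.card H = 2 ^ k} = 2 ^ (b + c)) := by
  refine ⟨?_, ?_, ?_⟩
  · intro h1 h2
    obtain ⟨k', rfl⟩ : ∃ k', k = k' + 1 := ⟨k - 1, by omega⟩
    have hcc := combinedCount a b c (k'+1) (by omega)
    rw [show min a (k'+1-1) = k' by omega, show min b (k'+1-1) = k' by omega,
      show min c (k'+1-1) = k' by omega, show min a (k'+1) = k'+1 by omega,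
      show min b (k'+1) = k'+1 by omega, show min c (k'+1) = k'+1 by omega] at hcc
    rw [show k'+1-1 = k' from rfl] at hcc ⊢
    apply Nat.eq_of_mul_eq_mul_right (pow_pos two_pos k')
    refine Nat.add_right_cancel (m := 2^(k'+(k'+k'))) ?_
    rw [hcc]
    simp only [pow_add, pow_succ, two_mul]
    ring
  · intro h1 h2
    obtain ⟨k', rfl⟩ : ∃ k', k = k' + 1 := ⟨k - 1, by omega⟩
    have hcc := combinedCount a b c (k'+1) (by omega)
    rw [show min a (k'+1-1) = k' by omega, show min b (k'+1-1) = k' by omega,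
      show min c (k'+1-1) = c by omega, show min a (k'+1) = k'+1 by omega,
      show min b (k'+1) = k'+1 by omega, show min c (k'+1) = c by omega] at hcc
    rw [show k'+1-1 = k' from rfl] at hcc
    rw [show c+(k'+1)-1 = c+k' by omega]
    apply Nat.eq_of_mul_eq_mul_right (pow_pos two_pos k')
    refine Nat.add_right_cancel (m := 2^(k'+(k'+c))) ?_
    rw [hcc]
    simp only [pow_add, pow_succ, two_mul]
    ring
  · intro h1 h2
    obtain ⟨k', rfl⟩ : ∃ k', k = k' + 1 := ⟨k - 1, by omega⟩
    have hcc := combinedCount a b c (k'+1) (by omega)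
    rw [show min a (k'+1-1) = k' by omega, show min b (k'+1-1) = b by omega,
      show min c (k'+1-1) = c by omega, show min a (k'+1) = k'+1 by omega,
      show min b (k'+1) = b by omega, show min c (k'+1) = c by omega] at hcc
    rw [show k'+1-1 = k' from rfl] at hcc
    apply Nat.eq_of_mul_eq_mul_right (pow_pos two_pos k')
    refine Nat.add_right_cancel (m := 2^(k'+(b+c))) ?_
    rw [hcc]
    simp only [pow_add, pow_succ, two_mul]
    ring
end

section
/- Let A = C_{2^a} × C_{2^b} × C_{2^c} × C_{2^d} with a ≥ b ≥ c ≥ d ≥ 1. The number of cyclic subgroups of order 2^k is 15·2^(3(k−1)) if 1 ≤ k ≤ d, 7·2^d·2^(2(k−1)) if d < k ≤ c, 3·2^(c+d+k−1) if c < k ≤ b, and 2^(b+c+d) if b < k ≤ a. -/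
lemma tors_zmod (n k : ℕ) : Nat.card {x : ZMod (2^n) | 2^k • x = 0} = 2 ^ min k n := by
  classical
  haveI : NeZero (2^n) := ⟨by positivity⟩
  set m := min k n with hm
  have hmn : m ≤ n := min_le_right _ _
  have hset : {x : ZMod (2^n) | 2^k • x = 0} = {x : ZMod (2^n) | 2^m • x = 0} := by
    ext x
    simp only [Set.mem_setOf_eq, ← addOrderOf_dvd_iff_nsmul_eq_zero]
    have hx : addOrderOf x ∣ 2^n := by
      rw [addOrderOf_dvd_iff_nsmul_eq_zero, nsmul_eq_mul, ZMod.natCast_self, zero_mul]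
    constructor
    · intro h
      obtain ⟨j, hjk, ho⟩ := (Nat.dvd_prime_pow Nat.prime_two).mp h
      rw [ho] at hx ⊢
      have hjn : j ≤ n := (Nat.pow_dvd_pow_iff_le_right one_lt_two).mp hx
      exact pow_dvd_pow _ (le_min hjk hjn)
    · intro h; exact h.trans (pow_dvd_pow _ (min_le_left _ _))
  rw [hset]
  set g : ZMod (2^n) := ((2^(n-m) : ℕ) : ZMod (2^n)) with hg
  have hog : addOrderOf g = 2^m := by
    rw [hg, ZMod.addOrderOf_coe _ (NeZero.ne _), Nat.gcd_eq_right (pow_dvd_pow _ (Nat.sub_le n m)),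
      Nat.pow_div (Nat.sub_le n m) (by norm_num), Nat.sub_sub_self hmn]
  have h2 : (2^m : ℕ) • g = 0 := addOrderOf_dvd_iff_nsmul_eq_zero.mp (dvd_of_eq hog)
  have hsub : (AddSubgroup.zmultiples g : Set (ZMod (2^n))) ⊆ {x : ZMod (2^n) | 2^m • x = 0} := by
    rintro x ⟨z, rfl⟩
    show (2^m : ℕ) • z • g = 0
    rw [smul_comm, h2, smul_zero]
  have hle : Nat.card {x : ZMod (2^n) | 2^m • x = 0} ≤ 2^m := by
    rw [Nat.card_eq_fintype_card, Fintype.card_subtype]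
    exact IsAddCyclic.card_nsmul_eq_zero_le (by positivity)
  have h1 : Nat.card (AddSubgroup.zmultiples g : Set (ZMod (2^n))) ≤
      Nat.card {x : ZMod (2^n) | 2^m • x = 0} := Nat.card_mono (Set.toFinite _) hsub
  have h3 : Nat.card (AddSubgroup.zmultiples g : Set (ZMod (2^n))) = 2^m := by
    rw [← hog]; exact Nat.card_zmultiples g
  omega

lemma tors_prod {A B : Type*} [AddGroup A] [AddGroup B] (m : ℕ) :
    Nat.card {x : A × B | m • x = 0} =
      Nat.card {a : A | m • a = 0} * Nat.card {b : B | m • b = 0} := by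
  rw [← Nat.card_prod]
  apply Nat.card_congr
  refine (Equiv.subtypeEquivRight fun x => ?_).trans (Equiv.subtypeProdEquivProd)
  simp only [Set.mem_setOf_eq, Prod.ext_iff]
  rfl

lemma isAddCyclic_zmultiples {G : Type*} [AddCommGroup G] (x : G) :
    IsAddCyclic (AddSubgroup.zmultiples x) := by
  refine ⟨⟨⟨x, AddSubgroup.mem_zmultiples x⟩, ?_⟩⟩
  rintro ⟨y, z, rfl⟩
  exact ⟨z, Subtype.ext (by simp)⟩

lemma exact_card {G : Type*} [AddCommGroup G] [Fintype G] (k : ℕ) (hk : 1 ≤ k) :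
    Nat.card {x : G | addOrderOf x = 2^k} + Nat.card {x : G | 2^(k-1) • x = 0}
      = Nat.card {x : G | 2^k • x = 0} := by
  classical
  have hdisj : Disjoint {x : G | addOrderOf x = 2^k} {x : G | 2^(k-1) • x = 0} := by
    rw [Set.disjoint_left]; intro x hx h2
    rw [Set.mem_setOf_eq] at hx h2
    have h3 := addOrderOf_dvd_iff_nsmul_eq_zero.mpr h2
    rw [hx] at h3
    exact absurd ((Nat.pow_dvd_pow_iff_le_right one_lt_two).mp h3) (by omega)
  have hunion : {x : G | addOrderOf x = 2^k} ∪ {x : G | 2^(k-1) • x = 0}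
      = {x : G | 2^k • x = 0} := by
    ext x
    simp only [Set.mem_union, Set.mem_setOf_eq, ← addOrderOf_dvd_iff_nsmul_eq_zero]
    constructor
    · rintro (h | h)
      · exact h ▸ dvd_rfl
      · exact h.trans (pow_dvd_pow _ (by omega))
    · intro h
      obtain ⟨j, hjk, ho⟩ := (Nat.dvd_prime_pow Nat.prime_two).mp h
      rcases eq_or_lt_of_le hjk with h1 | h1
      · left; rw [ho, h1]
      · right; rw [ho]; exact pow_dvd_pow _ (by omega)
  rw [Nat.card_coe_set_eq, Nat.card_coe_set_eq, Nat.card_coe_set_eq, ← hunion,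
    Set.ncard_union_eq hdisj (Set.toFinite _) (Set.toFinite _)]

lemma fiber_card {G : Type*} [AddCommGroup G] [Fintype G] (k : ℕ) (hk : 1 ≤ k) :
    Nat.card {x : G | addOrderOf x = 2^k} =
      {H : AddSubgroup G | (∃ x, H = AddSubgroup.zmultiples x) ∧ Nat.card H = 2^k}.ncard
        * 2^(k-1) := by
  classical
  set S := {H : AddSubgroup G | (∃ x, H = AddSubgroup.zmultiples x) ∧ Nat.card H = 2^k} with hS
  set E := {x : G | addOrderOf x = 2^k} with hE
  haveI : Fintype (AddSubgroup G) := Fintype.ofFinite _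
  have hmem : ∀ x : E, AddSubgroup.zmultiples (x : G) ∈ S := fun x =>
    ⟨⟨(x : G), rfl⟩, by rw [Nat.card_zmultiples]; exact x.2⟩
  let f : E → S := fun x => ⟨AddSubgroup.zmultiples (x : G), hmem x⟩
  have hfib : ∀ H : S, Nat.card {x : E // f x = H} = 2^(k-1) := by
    intro H
    obtain ⟨⟨x₀, hx₀⟩, hcard⟩ := H.2
    haveI : IsAddCyclic (H : AddSubgroup G) := hx₀ ▸ isAddCyclic_zmultiples x₀
    have e : {x : E // f x = H} ≃ {y : (H : AddSubgroup G) // addOrderOf y = 2^k} := by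
      refine ⟨fun x => ⟨⟨(x.1 : G), ?_⟩, ?_⟩, fun y => ⟨⟨(y.1 : G), ?_⟩, ?_⟩, ?_, ?_⟩
      · have : AddSubgroup.zmultiples (x.1 : G) = (H : AddSubgroup G) :=
          congrArg Subtype.val x.2
        exact this ▸ AddSubgroup.mem_zmultiples _
      · rw [AddSubgroup.addOrderOf_mk]; exact x.1.2
      · show addOrderOf (y.1 : G) = 2^k
        rw [AddSubgroup.addOrderOf_coe]; exact y.2
      · refine Subtype.ext ?_
        show AddSubgroup.zmultiples ((y.1 : G)) = (H : AddSubgroup G)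
        refine AddSubgroup.eq_of_le_of_card_ge ?_ ?_
        · rw [AddSubgroup.zmultiples_le]; exact y.1.2
        · rw [hcard, Nat.card_zmultiples, AddSubgroup.addOrderOf_coe, y.2]
      · intro x; ext; rfl
      · intro y; ext; rfl
    rw [Nat.card_congr e, Nat.card_eq_fintype_card, Fintype.card_subtype]
    rw [IsAddCyclic.card_addOrderOf_eq_totient
      (by rw [← Nat.card_eq_fintype_card, hcard])]
    rw [Nat.totient_prime_pow Nat.prime_two (by omega)]
    omega
  calc Nat.card E = Nat.card (Σ H : S, {x : E // f x = H}) :=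
        Nat.card_congr (Equiv.sigmaFiberEquiv f).symm
    _ = ∑ H : S, Nat.card {x : E // f x = H} := by
        rw [Nat.card_eq_fintype_card, Fintype.card_sigma]
        simp [Nat.card_eq_fintype_card]
    _ = S.ncard * 2^(k-1) := by
        rw [Finset.sum_congr rfl (fun H _ => hfib H), Finset.sum_const, Finset.card_univ,
          smul_eq_mul, ← Nat.card_coe_set_eq, Nat.card_eq_fintype_card]

lemma count_arith {N B v m : ℕ} (hv : 0 < v) (hm : 0 < m)
    (h : N * v + B * v = B * v * m) : N = (m - 1) * B := by
  have h7 : (N + B) * v = (m * B) * v := by rw [add_mul, h]; ring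
  have h8 := Nat.eq_of_mul_eq_mul_right hv h7
  have h9 : (m - 1) * B + B = m * B := by
    rw [Nat.sub_one_mul, Nat.sub_add_cancel (Nat.le_mul_of_pos_left B hm)]
  exact Nat.add_right_cancel (h8.trans h9.symm)

/-- In `C_{2^a} × C_{2^b} × C_{2^c} × C_{2^d}` with `a ≥ b ≥ c ≥ d ≥ 1`, the number of
cyclic subgroups of order `2^k` is `15·2^(3(k-1))` if `1 ≤ k ≤ d`, `7·2^d·2^(2(k-1))` if
`d < k ≤ c`, `3·2^(c+d+k-1)` if `c < k ≤ b`, and `2^(b+c+d)` if `b < k ≤ a`. -/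
theorem count_cyclic_subgroups_four_factors (a b c d : ℕ) (hd : 1 ≤ d) (hdc : d ≤ c)
    (hcb : c ≤ b) (hba : b ≤ a) (k : ℕ) :
    (1 ≤ k → k ≤ d →
      Set.ncard {H : AddSubgroup (ZMod (2 ^ a) × ZMod (2 ^ b) × ZMod (2 ^ c) × ZMod (2 ^ d)) |
        (∃ x, H = AddSubgroup.zmultiples x) ∧ Nat.card H = 2 ^ k} = 15 * 2 ^ (3 * (k - 1))) ∧
    (d < k → k ≤ c →
      Set.ncard {H : AddSubgroup (ZMod (2 ^ a) × ZMod (2 ^ b) × ZMod (2 ^ c) × ZMod (2 ^ d)) |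
        (∃ x, H = AddSubgroup.zmultiples x) ∧ Nat.card H = 2 ^ k} =
        7 * 2 ^ d * 2 ^ (2 * (k - 1))) ∧
    (c < k → k ≤ b →
      Set.ncard {H : AddSubgroup (ZMod (2 ^ a) × ZMod (2 ^ b) × ZMod (2 ^ c) × ZMod (2 ^ d)) |
        (∃ x, H = AddSubgroup.zmultiples x) ∧ Nat.card H = 2 ^ k} = 3 * 2 ^ (c + d + k - 1)) ∧
    (b < k → k ≤ a →
      Set.ncard {H : AddSubgroup (ZMod (2 ^ a) × ZMod (2 ^ b) × ZMod (2 ^ c) × ZMod (2 ^ d)) |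
        (∃ x, H = AddSubgroup.zmultiples x) ∧ Nat.card H = 2 ^ k} = 2 ^ (b + c + d)) := by
  haveI : NeZero (2^a) := ⟨by positivity⟩
  haveI : NeZero (2^b) := ⟨by positivity⟩
  haveI : NeZero (2^c) := ⟨by positivity⟩
  haveI : NeZero (2^d) := ⟨by positivity⟩
  have key : ∀ j : ℕ, Nat.card {x : ZMod (2 ^ a) × ZMod (2 ^ b) × ZMod (2 ^ c) × ZMod (2 ^ d) |
      2^j • x = 0} = 2^(min j a + min j b + min j c + min j d) := by
    intro j
    rw [tors_prod, tors_prod, tors_prod, tors_zmod, tors_zmod, tors_zmod, tors_zmod,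
      ← pow_add, ← pow_add, ← pow_add]
    congr 1
    omega
  have main : ∀ k' : ℕ, 1 ≤ k' →
      Set.ncard {H : AddSubgroup (ZMod (2 ^ a) × ZMod (2 ^ b) × ZMod (2 ^ c) × ZMod (2 ^ d)) |
          (∃ x, H = AddSubgroup.zmultiples x) ∧ Nat.card H = 2^k'} * 2^(k'-1)
        + 2^(min (k'-1) a + min (k'-1) b + min (k'-1) c + min (k'-1) d)
        = 2^(min k' a + min k' b + min k' c + min k' d) := by
    intro k' hk'
    rw [← fiber_card k' hk', ← key (k'-1), ← key k']
    exact exact_card k' hk'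
  have hv : ∀ j : ℕ, 0 < (2:ℕ)^j := fun j => by positivity
  refine ⟨?_, ?_, ?_, ?_⟩
  · intro h1 h2
    obtain ⟨j, rfl⟩ : ∃ j, k = j + 1 := ⟨k - 1, by omega⟩
    have h := main (j+1) (by omega)
    simp only [Nat.add_sub_cancel] at h ⊢
    set N := Set.ncard {H : AddSubgroup (ZMod (2 ^ a) × ZMod (2 ^ b) × ZMod (2 ^ c) × ZMod (2 ^ d)) |
      (∃ x, H = AddSubgroup.zmultiples x) ∧ Nat.card H = 2 ^ (j+1)} with hN
    rw [show (j+1) ⊓ a + ((j+1) ⊓ b) + ((j+1) ⊓ c) + ((j+1) ⊓ d) = 3*j + j + 4 by omega,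
      show j ⊓ a + (j ⊓ b) + (j ⊓ c) + (j ⊓ d) = 3*j + j by omega] at h
    simp only [pow_add] at h
    have := count_arith (hv j) (show 0 < 2^4 by norm_num) h
    norm_num at this
    rw [this] <;> try ring
  · intro h1 h2
    obtain ⟨j, rfl⟩ : ∃ j, k = j + 1 := ⟨k - 1, by omega⟩
    have h := main (j+1) (by omega)
    simp only [Nat.add_sub_cancel] at h ⊢
    set N := Set.ncard {H : AddSubgroup (ZMod (2 ^ a) × ZMod (2 ^ b) × ZMod (2 ^ c) × ZMod (2 ^ d)) |
      (∃ x, H = AddSubgroup.zmultiples x) ∧ Nat.card H = 2 ^ (j+1)} with hN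
    rw [show (j+1) ⊓ a + ((j+1) ⊓ b) + ((j+1) ⊓ c) + ((j+1) ⊓ d) = d + 2*j + j + 3 by omega,
      show j ⊓ a + (j ⊓ b) + (j ⊓ c) + (j ⊓ d) = d + 2*j + j by omega] at h
    simp only [pow_add] at h
    have := count_arith (hv j) (show 0 < 2^3 by norm_num) h
    norm_num at this
    rw [this] <;> try ring
  · intro h1 h2
    obtain ⟨j, rfl⟩ : ∃ j, k = j + 1 := ⟨k - 1, by omega⟩
    have h := main (j+1) (by omega)
    rw [show c + d + (j + 1) - 1 = c + d + j by omega]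
    simp only [Nat.add_sub_cancel] at h
    set N := Set.ncard {H : AddSubgroup (ZMod (2 ^ a) × ZMod (2 ^ b) × ZMod (2 ^ c) × ZMod (2 ^ d)) |
      (∃ x, H = AddSubgroup.zmultiples x) ∧ Nat.card H = 2 ^ (j+1)} with hN
    rw [show (j+1) ⊓ a + ((j+1) ⊓ b) + ((j+1) ⊓ c) + ((j+1) ⊓ d) = (c + d + j) + j + 2 by omega,
      show j ⊓ a + (j ⊓ b) + (j ⊓ c) + (j ⊓ d) = (c + d + j) + j by omega] at h
    simp only [pow_add] at h
    have := count_arith (hv j) (show 0 < 2^2 by norm_num) h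
    norm_num at this
    rw [this] <;> try ring
  · intro h1 h2
    obtain ⟨j, rfl⟩ : ∃ j, k = j + 1 := ⟨k - 1, by omega⟩
    have h := main (j+1) (by omega)
    simp only [Nat.add_sub_cancel] at h
    set N := Set.ncard {H : AddSubgroup (ZMod (2 ^ a) × ZMod (2 ^ b) × ZMod (2 ^ c) × ZMod (2 ^ d)) |
      (∃ x, H = AddSubgroup.zmultiples x) ∧ Nat.card H = 2 ^ (j+1)} with hN
    rw [show (j+1) ⊓ a + ((j+1) ⊓ b) + ((j+1) ⊓ c) + ((j+1) ⊓ d) = (b + c + d) + j + 1 by omega,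
      show j ⊓ a + (j ⊓ b) + (j ⊓ c) + (j ⊓ d) = (b + c + d) + j by omega] at h
    simp only [pow_add] at h
    have := count_arith (hv j) (show 0 < 2^1 by norm_num) h
    norm_num at this
    rw [this] <;> try ring
end

section
/- If A is a finite abelian 2-group, then the number of cyclic subgroups of C_2 × A equals twice the number of cyclic subgroups of A. -/
open AddSubgroup

lemma odd_zsmul_one_zmod_two {m : ℤ} (hm : Odd m) : m • (1 : ZMod 2) = 1 := by
  obtain ⟨c, rfl⟩ := hm
  rw [zsmul_one]
  push_cast
  rw [show ((2 : ZMod 2)) = 0 by decide]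
  ring

/-- In a finite abelian 2-group, if two elements generate the same cyclic subgroup,
then one is an odd multiple of the other. -/
lemma odd_smul_of_zmultiples_eq {A : Type*} [AddCommGroup A] [Finite A] {n : ℕ}
    (hA : Nat.card A = 2 ^ n) {a b : A}
    (h : zmultiples a = zmultiples b) : ∃ m : ℤ, Odd m ∧ b = m • a := by
  have hb : b ∈ zmultiples a := h ▸ mem_zmultiples b
  have ha : a ∈ zmultiples b := h.symm ▸ mem_zmultiples a
  obtain ⟨m, hm⟩ := mem_zmultiples_iff.mp hb
  obtain ⟨l, hl⟩ := mem_zmultiples_iff.mp ha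
  rcases eq_or_ne a 0 with rfl | ha0
  · exact ⟨1, odd_one, by simp [← hm]⟩
  · have hdvd : addOrderOf a ∣ 2 ^ n := hA ▸ addOrderOf_dvd_natCard a
    obtain ⟨k, hk, hord⟩ := (Nat.dvd_prime_pow Nat.prime_two).mp hdvd
    have hk0 : k ≠ 0 := by
      rintro rfl
      exact ha0 (AddMonoid.addOrderOf_eq_one_iff.mp (by simpa using hord))
    have h2 : (2 : ℤ) ∣ (addOrderOf a : ℤ) := by
      rw [hord]
      exact_mod_cast dvd_pow_self 2 hk0
    have hz : (m * l - 1) • a = 0 := by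
      have hml : (m * l) • a = a := by rw [mul_comm, mul_zsmul, hm, hl]
      rw [sub_zsmul, hml, one_zsmul]
      abel
    have hdv : (addOrderOf a : ℤ) ∣ m * l - 1 := addOrderOf_dvd_iff_zsmul_eq_zero.mpr hz
    have h2' : (2 : ℤ) ∣ m * l - 1 := h2.trans hdv
    have hodd : Odd (m * l) := by
      obtain ⟨d, hd⟩ := h2'
      exact ⟨d, by omega⟩
    exact ⟨m, (Int.odd_mul.mp hodd).1, hm.symm⟩

/-- If `A` is a finite abelian 2-group, then the number of cyclic subgroups of `C₂ × A`
equals twice the number of cyclic subgroups of `A`. -/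
theorem cyclic_subgroups_double {A : Type*} [AddCommGroup A] [Finite A] (n : ℕ)
    (hA : Nat.card A = 2 ^ n) :
    Set.ncard {H : AddSubgroup (ZMod 2 × A) | ∃ x, H = AddSubgroup.zmultiples x} =
      2 * Set.ncard {H : AddSubgroup A | ∃ x, H = AddSubgroup.zmultiples x} := by
  classical
  have finsub : Finite (AddSubgroup (ZMod 2 × A)) :=
    Finite.of_injective (fun H => (H : Set (ZMod 2 × A))) SetLike.coe_injective
  set S : Set (AddSubgroup (ZMod 2 × A)) := {H | ∃ x, H = zmultiples x} with hS
  set T : Set (AddSubgroup A) := {H | ∃ x, H = zmultiples x} with hT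
  set S₀ : Set (AddSubgroup (ZMod 2 × A)) := {H ∈ S | ∀ x ∈ H, x.1 = 0} with hS₀
  set S₁ : Set (AddSubgroup (ZMod 2 × A)) := {H ∈ S | ∃ x ∈ H, x.1 ≠ 0} with hS₁
  have hunion : S = S₀ ∪ S₁ := by
    ext H
    simp only [hS₀, hS₁, Set.mem_union, Set.mem_setOf_eq]
    constructor
    · intro hH
      by_cases hc : ∀ x ∈ H, x.1 = 0
      · exact Or.inl ⟨hH, hc⟩
      · push_neg at hc; exact Or.inr ⟨hH, hc⟩
    · rintro (⟨h, -⟩ | ⟨h, -⟩) <;> exact h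
  have hdisj : Disjoint S₀ S₁ := by
    rw [Set.disjoint_left]
    rintro H ⟨-, h0⟩ ⟨-, x, hx, hx1⟩
    exact hx1 (h0 x hx)
  set p : (ZMod 2 × A) →+ A := AddMonoidHom.snd (ZMod 2) A with hp
  set P : AddSubgroup (ZMod 2 × A) → AddSubgroup A := fun H => H.map p with hP
  have hPz : ∀ x : ZMod 2 × A, P (zmultiples x) = zmultiples x.2 := fun x => by
    simp [hP, hp, AddMonoidHom.map_zmultiples]
  have zmod2 : ∀ c : ZMod 2, c = 0 ∨ c = 1 := by decide
  have smul_pair : ∀ (m : ℤ) (c : ZMod 2) (a : A), m • (c, a) = (m • c, m • a) :=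
    fun _ _ _ => rfl
  have gen1 : ∀ H ∈ S₁, ∃ a : A, H = zmultiples ((1 : ZMod 2), a) := by
    rintro H ⟨⟨x, rfl⟩, y, hy, hy1⟩
    rcases zmod2 x.1 with h1 | h1
    · exfalso
      obtain ⟨k, hk⟩ := mem_zmultiples_iff.mp hy
      apply hy1
      rw [← hk, show x = (x.1, x.2) from rfl, smul_pair, h1]
      simp
    · exact ⟨x.2, by rw [show x = (x.1, x.2) from rfl, h1]⟩
  -- Bijection S₀ ≃ T via P
  have bij0 : Set.BijOn P S₀ T := by
    refine ⟨?_, ?_, ?_⟩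
    · rintro H ⟨⟨x, rfl⟩, -⟩
      exact ⟨x.2, hPz x⟩
    · rintro H ⟨⟨x, rfl⟩, hx0⟩ H' ⟨⟨x', rfl⟩, hx0'⟩ hPP
      have hx1 : x.1 = 0 := hx0 x (mem_zmultiples x)
      have hx1' : x'.1 = 0 := hx0' x' (mem_zmultiples x')
      rw [hPz, hPz] at hPP
      have h2 : x'.2 ∈ zmultiples x.2 := hPP ▸ mem_zmultiples x'.2
      have h2' : x.2 ∈ zmultiples x'.2 := hPP.symm ▸ mem_zmultiples x.2
      obtain ⟨m, hm⟩ := mem_zmultiples_iff.mp h2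
      obtain ⟨l, hl⟩ := mem_zmultiples_iff.mp h2'
      apply le_antisymm
      · rw [zmultiples_le]
        refine mem_zmultiples_iff.mpr ⟨l, ?_⟩
        rw [show x' = (x'.1, x'.2) from rfl, show x = (x.1, x.2) from rfl, smul_pair,
          hx1, hx1', hl]
        simp
      · rw [zmultiples_le]
        refine mem_zmultiples_iff.mpr ⟨m, ?_⟩
        rw [show x' = (x'.1, x'.2) from rfl, show x = (x.1, x.2) from rfl, smul_pair,
          hx1, hx1', hm]
        simp
    · rintro K ⟨a, rfl⟩
      refine ⟨zmultiples ((0 : ZMod 2), a), ⟨⟨_, rfl⟩, ?_⟩, hPz _⟩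
      rintro x hx
      obtain ⟨k, hk⟩ := mem_zmultiples_iff.mp hx
      rw [← hk, smul_pair]
      simp
  -- Bijection S₁ ≃ T via P
  have bij1 : Set.BijOn P S₁ T := by
    refine ⟨?_, ?_, ?_⟩
    · rintro H hH
      obtain ⟨a, rfl⟩ := gen1 H hH
      exact ⟨a, hPz _⟩
    · intro H hH H' hH' hPP
      obtain ⟨a, rfl⟩ := gen1 H hH
      obtain ⟨b, rfl⟩ := gen1 H' hH'
      rw [hPz, hPz] at hPP
      obtain ⟨m, hmo, hm⟩ := odd_smul_of_zmultiples_eq hA hPP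
      obtain ⟨l, hlo, hl⟩ := odd_smul_of_zmultiples_eq hA hPP.symm
      apply le_antisymm
      · rw [zmultiples_le]
        refine mem_zmultiples_iff.mpr ⟨l, ?_⟩
        rw [smul_pair, odd_zsmul_one_zmod_two hlo, ← hl]
      · rw [zmultiples_le]
        refine mem_zmultiples_iff.mpr ⟨m, ?_⟩
        rw [smul_pair, odd_zsmul_one_zmod_two hmo, ← hm]
    · rintro K ⟨a, rfl⟩
      refine ⟨zmultiples ((1 : ZMod 2), a),
        ⟨⟨_, rfl⟩, ⟨((1 : ZMod 2), a), mem_zmultiples _, ?_⟩⟩, hPz _⟩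
      simp
  have h0 : S₀.ncard = T.ncard := by
    rw [← bij0.image_eq]
    exact (Set.ncard_image_of_injOn bij0.injOn).symm
  have h1 : S₁.ncard = T.ncard := by
    rw [← bij1.image_eq]
    exact (Set.ncard_image_of_injOn bij1.injOn).symm
  calc S.ncard = (S₀ ∪ S₁).ncard := by rw [hunion]
    _ = S₀.ncard + S₁.ncard := Set.ncard_union_eq hdisj (Set.toFinite _) (Set.toFinite _)
    _ = 2 * T.ncard := by rw [h0, h1]; ring
end

section
/- Let R be a commutative ring, G a group with an involution * such that g g* is central for all g, and let L = M(G, *, g₀) = G ∪ Gu be the loop obtained by doubling. If I is an ideal of the loop ring RL, then π_G(I) = π_u(I), this set is an ideal of RG, and it is invariant under *. Conversely, if J is a *-invariant ideal of RG, then J + Ju is an ideal of RL. -/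
/-!
Multiplying by `u` on either side swaps the two coordinates of `a + bu` up to a unit and the
involution: `(a + bu)u = g₀ (st 1) b + au` and `u(a + bu) = g₀ b* + a*u`, while multiplying by
`RG` acts coordinatewise. Hence `π_G(I) = π_u(I)`, and this set inherits the ideal and
`*`-invariance properties of `I`. Conversely the formula for the product shows that `J + Ju`
absorbs products as soon as `J` is a `*`-invariant two-sided ideal.
-/

/-- The involution on the group ring `RG` induced by an involution `st` on `G`. -/
noncomputable def starRG {R G : Type*} [CommRing R] [Group G] (st : G → G) :
    MonoidAlgebra R G → MonoidAlgebra R G :=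
  fun x => MonoidAlgebra.mapDomain st x

/-- Multiplication on `RL = RG + RGu`, written on pairs `(a, b) = a + bu`:
`(a+bu)(x+yu) = (ax + g₀·y*·b) + (ya + b·x*)u`. -/
noncomputable def doubledMul {R G : Type*} [CommRing R] [Group G] (st : G → G) (g₀ : G)
    (p q : MonoidAlgebra R G × MonoidAlgebra R G) :
    MonoidAlgebra R G × MonoidAlgebra R G :=
  (p.1 * q.1 + MonoidAlgebra.of R G g₀ * starRG st q.2 * p.2,
   q.2 * p.1 + p.2 * starRG st q.1)

/-- `I` is an ideal of the loop ring `RL` (an additive subgroup closed under left and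
right multiplication by arbitrary elements of `RL`). -/
def IsLoopIdeal {R G : Type*} [CommRing R] [Group G] (st : G → G) (g₀ : G)
    (I : Set (MonoidAlgebra R G × MonoidAlgebra R G)) : Prop :=
  (0 : MonoidAlgebra R G × MonoidAlgebra R G) ∈ I ∧
  (∀ p q, p ∈ I → q ∈ I → p + q ∈ I) ∧
  (∀ p, p ∈ I → -p ∈ I) ∧
  (∀ p, p ∈ I → ∀ q, doubledMul st g₀ p q ∈ I ∧ doubledMul st g₀ q p ∈ I)

/-- `J` is an ideal of the group ring `RG` which is invariant under the involution. -/
def IsStarIdealRG {R G : Type*} [CommRing R] [Group G] (st : G → G)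
    (J : Set (MonoidAlgebra R G)) : Prop :=
  (0 : MonoidAlgebra R G) ∈ J ∧
  (∀ x y, x ∈ J → y ∈ J → x + y ∈ J) ∧
  (∀ x, x ∈ J → -x ∈ J) ∧
  (∀ x, x ∈ J → ∀ a : MonoidAlgebra R G, a * x ∈ J ∧ x * a ∈ J) ∧
  (∀ x, x ∈ J → starRG st x ∈ J)

section

open MonoidAlgebra

variable {R G : Type*} [CommRing R] [Group G] (st : G → G) (g₀ : G)

theorem starRG_zero : starRG (R := R) st 0 = 0 :=
  mapDomain_zero st

theorem starRG_one : starRG st (1 : MonoidAlgebra R G) = of R G (st 1) :=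
  mapDomain_single

theorem of_inv_mul_of_mul (g : G) (y : MonoidAlgebra R G) :
    of R G g⁻¹ * (of R G g * y) = y := by
  rw [← mul_assoc, ← map_mul, inv_mul_cancel, map_one, one_mul]

theorem doubledMul_zero_one (p : MonoidAlgebra R G × MonoidAlgebra R G) :
    doubledMul st g₀ p (0, 1) = (of R G (g₀ * st 1) * p.2, p.1) := by
  simp [doubledMul, starRG_one, starRG_zero]

theorem zero_one_doubledMul (p : MonoidAlgebra R G × MonoidAlgebra R G) :
    doubledMul st g₀ (0, 1) p = (of R G g₀ * starRG st p.2, starRG st p.1) := by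
  simp [doubledMul]

theorem doubledMul_mk_zero (p : MonoidAlgebra R G × MonoidAlgebra R G) (x : MonoidAlgebra R G) :
    doubledMul st g₀ p (x, 0) = (p.1 * x, p.2 * starRG st x) := by
  simp [doubledMul, starRG_zero]

theorem mk_zero_doubledMul (x : MonoidAlgebra R G) (p : MonoidAlgebra R G × MonoidAlgebra R G) :
    doubledMul st g₀ (x, 0) p = (x * p.1, p.2 * x) := by
  simp [doubledMul]

namespace IsLoopIdeal

variable {st g₀} {I : Set (MonoidAlgebra R G × MonoidAlgebra R G)}
  {p : MonoidAlgebra R G × MonoidAlgebra R G}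

theorem doubledMul_mem (hI : IsLoopIdeal st g₀ I) (hp : p ∈ I) (q) :
    doubledMul st g₀ p q ∈ I :=
  (hI.2.2.2 p hp q).1

theorem mem_doubledMul (hI : IsLoopIdeal st g₀ I) (hp : p ∈ I) (q) :
    doubledMul st g₀ q p ∈ I :=
  (hI.2.2.2 p hp q).2

theorem fst_image_subset_snd_image (hI : IsLoopIdeal st g₀ I) :
    Prod.fst '' I ⊆ Prod.snd '' I := by
  rintro _ ⟨p, hp, rfl⟩
  exact ⟨_, doubledMul_zero_one st g₀ p ▸ hI.doubledMul_mem hp (0, 1), rfl⟩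

theorem snd_image_subset_fst_image (hI : IsLoopIdeal st g₀ I) :
    Prod.snd '' I ⊆ Prod.fst '' I := by
  rintro _ ⟨p, hp, rfl⟩
  set c := g₀ * st 1
  have hpu : (of R G c * p.2, p.1) ∈ I :=
    doubledMul_zero_one st g₀ p ▸ hI.doubledMul_mem hp (0, 1)
  have hmem := mk_zero_doubledMul st g₀ (of R G c⁻¹) _ ▸
    hI.mem_doubledMul hpu (of R G c⁻¹, 0)
  exact ⟨_, hmem, of_inv_mul_of_mul c p.2⟩

theorem fst_image_eq_snd_image (hI : IsLoopIdeal st g₀ I) :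
    Prod.fst '' I = Prod.snd '' I :=
  hI.fst_image_subset_snd_image.antisymm hI.snd_image_subset_fst_image

theorem isStarIdealRG_fst_image (hI : IsLoopIdeal st g₀ I) :
    IsStarIdealRG st (Prod.fst '' I) := by
  refine ⟨⟨0, hI.1, rfl⟩, ?_, ?_, ?_, ?_⟩
  · rintro _ _ ⟨p, hp, rfl⟩ ⟨q, hq, rfl⟩
    exact ⟨p + q, hI.2.1 p q hp hq, rfl⟩
  · rintro _ ⟨p, hp, rfl⟩
    exact ⟨-p, hI.2.2.1 p hp, rfl⟩
  · rintro _ ⟨p, hp, rfl⟩ a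
    exact ⟨⟨_, mk_zero_doubledMul st g₀ a p ▸ hI.mem_doubledMul hp (a, 0), rfl⟩,
      ⟨_, doubledMul_mk_zero st g₀ p a ▸ hI.doubledMul_mem hp (a, 0), rfl⟩⟩
  · rintro _ ⟨p, hp, rfl⟩
    rw [hI.fst_image_eq_snd_image]
    exact ⟨_, zero_one_doubledMul st g₀ p ▸ hI.mem_doubledMul hp (0, 1), rfl⟩

end IsLoopIdeal

namespace IsStarIdealRG

variable {st} {J : Set (MonoidAlgebra R G)}

theorem isLoopIdeal_prod (hJ : IsStarIdealRG st J) : IsLoopIdeal st g₀ (J ×ˢ J) := by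
  obtain ⟨j0, jadd, jneg, jmul, jstar⟩ := hJ
  refine ⟨⟨j0, j0⟩, ?_, ?_, ?_⟩
  · rintro p q ⟨hp1, hp2⟩ ⟨hq1, hq2⟩
    exact ⟨jadd _ _ hp1 hq1, jadd _ _ hp2 hq2⟩
  · rintro p ⟨hp1, hp2⟩
    exact ⟨jneg _ hp1, jneg _ hp2⟩
  · rintro p ⟨hp1, hp2⟩ q
    refine ⟨⟨?_, ?_⟩, ⟨?_, ?_⟩⟩
    · exact jadd _ _ (jmul _ hp1 q.1).2 (jmul _ hp2 _).1
    · exact jadd _ _ (jmul _ hp1 q.2).1 (jmul _ hp2 _).2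
    · have hstar : starRG st p.2 * q.2 ∈ J := (jmul _ (jstar _ hp2) q.2).2
      have hg₀ := (jmul _ hstar (of R G g₀)).1
      rw [← mul_assoc] at hg₀
      exact jadd _ _ (jmul _ hp1 q.1).1 hg₀
    · exact jadd _ _ (jmul _ hp2 q.1).2 (jmul _ (jstar _ hp1) q.2).1

end IsStarIdealRG

end

theorem loop_ring_ideals_general {R G : Type*} [CommRing R] [Group G] (st : G → G)
    (g₀ : G) :
    (∀ I : Set (MonoidAlgebra R G × MonoidAlgebra R G), IsLoopIdeal st g₀ I →
      Prod.fst '' I = Prod.snd '' I ∧ IsStarIdealRG st (Prod.fst '' I)) ∧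
    (∀ J : Set (MonoidAlgebra R G), IsStarIdealRG st J →
      IsLoopIdeal st g₀ {p : MonoidAlgebra R G × MonoidAlgebra R G |
        p.1 ∈ J ∧ p.2 ∈ J}) :=
  ⟨fun _ hI => ⟨hI.fst_image_eq_snd_image, hI.isStarIdealRG_fst_image⟩,
    fun _ hJ => hJ.isLoopIdeal_prod g₀⟩

/-- Let `R` be a commutative ring and `G` a group with an involution `st` such that
`g · st g` is central for all `g`, and let `L = M(G, st, g₀)` be the doubled loop.  If `I`
is an ideal of the loop ring `RL`, then `π_G(I) = π_u(I)` and this set is a `*`-invariant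
ideal of `RG`.  Conversely, if `J` is a `*`-invariant ideal of `RG`, then `J + Ju` is an
ideal of `RL`. -/
theorem loop_ring_ideals {R G : Type*} [CommRing R] [Group G] (st : G → G)
    (hanti : ∀ g h : G, st (g * h) = st h * st g)
    (hinv : ∀ g : G, st (st g) = g)
    (hcent : ∀ g : G, g * st g ∈ Subgroup.center G)
    (g₀ : G) (hg₀ : g₀ ∈ Subgroup.center G) (hg₀fix : st g₀ = g₀) :
    (∀ I : Set (MonoidAlgebra R G × MonoidAlgebra R G), IsLoopIdeal st g₀ I →
      Prod.fst '' I = Prod.snd '' I ∧ IsStarIdealRG st (Prod.fst '' I)) ∧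
    (∀ J : Set (MonoidAlgebra R G), IsStarIdealRG st J →
      IsLoopIdeal st g₀ {p : MonoidAlgebra R G × MonoidAlgebra R G |
        p.1 ∈ J ∧ p.2 ∈ J}) :=
  loop_ring_ideals_general st g₀
end

section
/- Let G be a finite group with G' = {1, s}, s central of order 2, let K be a field with char K ∤ |G|, let x ∈ G be noncentral, and let H = ⟨Z(G), x⟩. Then the number of K-classes of G consisting of conjugacy classes of the form {ax, sax} with a ∈ Z(G) equals the number of K-classes of H/⟨s⟩ minus the number of K-classes of Z(G)/⟨s⟩. -/
/-!
Every commutator `⁅x, g⁆` lies in `{1, s}`, hence is central with square `1`, so `x * x` is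
central and `H = Z(G) ∪ Z(G) x`. Reducing modulo `⟨s⟩` collapses each pair `{v, s v}` to a
point: the preimage of the power class of the image of `a x` is the class
`{(a x)^r, s (a x)^r}` of `a x` in `G`, and taking preimages along the surjection
`G → G ⧸ ⟨s⟩` is injective. So the classes in the statement correspond to the power classes of
`H ⧸ ⟨s⟩` coming from `Z(G) x`, and these are disjoint from those coming from `Z(G)`: an
element congruent modulo the central subgroup `⟨s⟩` to a central element is central, whereas
`a x` is not.
-/

open Subgroup QuotientGroup
open scoped commutatorElement

section CommutatorSubgroupOfOrderTwo

variable {G : Type*} [Group G] {s : G}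

theorem mul_self_eq_one_of_commutator_eq_pair (hcomm : (commutator G : Set G) = {1, s}) :
    s * s = 1 := by
  have hs : s ∈ commutator G := by simp [← SetLike.mem_coe, hcomm]
  have hss : s * s ∈ (commutator G : Set G) := mul_mem hs hs
  rw [hcomm] at hss
  rcases hss with hss | hss
  · exact hss
  · rw [mul_eq_left.mp hss, one_mul]

theorem commutatorElement_eq_one_or_eq_of_commutator_eq_pair
    (hcomm : (commutator G : Set G) = {1, s}) (x g : G) : ⁅x, g⁆ = 1 ∨ ⁅x, g⁆ = s := by
  have h : ⁅x, g⁆ ∈ (commutator G : Set G) := commutator_mem_commutator (mem_top x) (mem_top g)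
  rwa [hcomm] at h

theorem mul_self_mem_center_of_commutator_eq_pair (hs : s ∈ center G)
    (hcomm : (commutator G : Set G) = {1, s}) (x : G) : x * x ∈ center G := by
  refine mem_center_iff.mpr fun g => ?_
  have hc : ⁅x, g⁆ ∈ center G ∧ ⁅x, g⁆ * ⁅x, g⁆ = 1 := by
    rcases commutatorElement_eq_one_or_eq_of_commutator_eq_pair hcomm x g with h | h <;> rw [h]
    · exact ⟨one_mem _, mul_one 1⟩
    · exact ⟨hs, mul_self_eq_one_of_commutator_eq_pair hcomm⟩
  -- `⁅x * x, g⁆ = x ⁅x, g⁆ x⁻¹ ⁅x, g⁆ = ⁅x, g⁆ ^ 2` as `⁅x, g⁆` is central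
  have h : ⁅x * x, g⁆ = 1 := by
    rw [commutatorElement_mul_left_eq_conj_mul, mem_center_iff.mp hc.1 x, mul_inv_cancel_right,
      hc.2]
  exact (commutatorElement_eq_one_iff_mul_comm.mp h).symm

end CommutatorSubgroupOfOrderTwo

section ClosureCenterInsert

variable {G : Type*} [Group G] {x : G}

theorem zpow_mem_center_or_exists_mul_of_mul_self_mem_center (hx2 : x * x ∈ center G) (k : ℤ) :
    x ^ k ∈ center G ∨ ∃ a ∈ center G, x ^ k = a * x := by
  obtain ⟨m, rfl | rfl⟩ := Int.even_or_odd' k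
  · left
    rw [zpow_mul, zpow_two]
    exact zpow_mem hx2 m
  · right
    refine ⟨(x * x) ^ m, zpow_mem hx2 m, ?_⟩
    rw [zpow_add_one, zpow_mul, zpow_two]

theorem coe_closure_center_union_singleton (hx2 : x * x ∈ center G) :
    (closure ((center G : Set G) ∪ {x}) : Set G) = (center G : Set G) ∪ (· * x) '' center G := by
  ext h
  rw [SetLike.mem_coe, Subgroup.closure_union, closure_eq, ← zpowers_eq_closure,
    mem_sup_of_normal_left, Set.mem_union, Set.mem_image]
  constructor
  · rintro ⟨a, ha, _, hz, rfl⟩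
    obtain ⟨k, rfl⟩ := mem_zpowers_iff.mp hz
    rcases zpow_mem_center_or_exists_mul_of_mul_self_mem_center hx2 k with hk | ⟨b, hb, hk⟩
    · exact Or.inl (mul_mem ha hk)
    · exact Or.inr ⟨a * b, mul_mem ha hb, by rw [hk, mul_assoc]⟩
  · rintro (hh | ⟨a, ha, rfl⟩)
    · exact ⟨h, hh, 1, one_mem _, mul_one h⟩
    · exact ⟨a, ha, x, mem_zpowers x, rfl⟩

end ClosureCenterInsert

section QuotientByCentralInvolution

variable {G : Type*} [Group G] {s : G}

theorem mem_zpowers_iff_eq_one_or_eq_of_mul_self_eq_one (hs2 : s * s = 1) {g : G} :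
    g ∈ zpowers s ↔ g = 1 ∨ g = s := by
  constructor
  · intro hg
    obtain ⟨k, rfl⟩ := mem_zpowers_iff.mp hg
    obtain ⟨m, rfl | rfl⟩ := Int.even_or_odd' k
    · left
      rw [zpow_mul, zpow_two, hs2, one_zpow]
    · right
      rw [zpow_add_one, zpow_mul, zpow_two, hs2, one_zpow, one_mul]
  · rintro (rfl | rfl)
    · exact one_mem _
    · exact mem_zpowers _

theorem mk_eq_mk_iff_eq_or_eq_mul_of_mul_self_eq_one (hs : s ∈ center G) (hs2 : s * s = 1)
    {v w : G} : (v : G ⧸ zpowers s) = w ↔ v = w ∨ v = s * w := by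
  rw [QuotientGroup.eq, mem_zpowers_iff_eq_one_or_eq_of_mul_self_eq_one hs2, inv_mul_eq_one,
    inv_mul_eq_iff_eq_mul]
  refine or_congr_right ⟨fun h => ?_, fun h => ?_⟩
  · rw [h, mem_center_iff.mp hs v, ← mul_assoc, hs2, one_mul]
  · rw [h, mul_assoc, mem_center_iff.mp hs w, ← mul_assoc, hs2, one_mul]

theorem preimage_mk_setOf_eq_pow [(zpowers s).Normal] (hs : s ∈ center G) (hs2 : s * s = 1) (T : Submonoid ℕ)
    (g : G) :
    QuotientGroup.mk ⁻¹' {v : G ⧸ zpowers s | ∃ r ∈ T, v = (g : G ⧸ zpowers s) ^ r} =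
      {v | ∃ r ∈ T, v = g ^ r ∨ v = s * g ^ r} := by
  ext v
  simp only [Set.mem_preimage, Set.mem_ofPred_eq, ← QuotientGroup.mk_pow,
    mk_eq_mk_iff_eq_or_eq_mul_of_mul_self_eq_one hs hs2]

end QuotientByCentralInvolution

theorem mem_center_of_mk_eq_mk {G : Type*} [Group G] {N : Subgroup G} (hN : N ≤ center G)
    {g b : G} (hb : b ∈ center G) (h : (g : G ⧸ N) = b) : g ∈ center G := by
  simpa using mul_mem hb (inv_mem (hN (QuotientGroup.eq.mp h)))

theorem SetLike.setOf_exists_mem_eq_image {A α β : Type*} [SetLike A α] (p : A) (f : α → β) :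
    {b | ∃ a ∈ p, b = f a} = f '' p := by
  ext
  simp [eq_comm]

theorem card_classes_involving_x_general {G : Type*} [Group G] [Finite G] (s : G)
    (hs : s ∈ Subgroup.center G)
    (hcomm : (commutator G : Set G) = {1, s})
    (x : G) (hx : x ∉ Subgroup.center G)
    (H : Subgroup G) (hH : H = Subgroup.closure ((Subgroup.center G : Set G) ∪ {x}))
    (T : Submonoid ℕ)
    [hnorm : (Subgroup.zpowers s).Normal] :
    Set.ncard {S : Set G | ∃ a ∈ Subgroup.center G,
        S = {v | ∃ r ∈ T, v = (a * x) ^ r ∨ v = s * (a * x) ^ r}} =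
      Set.ncard {S : Set (G ⧸ Subgroup.zpowers s) | ∃ h ∈ H,
          S = {v | ∃ r ∈ T, v = (QuotientGroup.mk h : G ⧸ Subgroup.zpowers s) ^ r}} -
        Set.ncard {S : Set (G ⧸ Subgroup.zpowers s) | ∃ a ∈ Subgroup.center G,
          S = {v | ∃ r ∈ T, v = (QuotientGroup.mk a : G ⧸ Subgroup.zpowers s) ^ r}} := by
  have hs2 := mul_self_eq_one_of_commutator_eq_pair hcomm
  have hx2 := mul_self_mem_center_of_commutator_eq_pair hs hcomm x
  have hmk_inj : Function.Injective (QuotientGroup.mk (s := zpowers s) ⁻¹' ·) :=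
    Set.preimage_injective.mpr QuotientGroup.mk_surjective
  -- each family of classes becomes an image of a subgroup, each power class `{g ^ r | r ∈ T}`
  -- becomes `(g ^ ·) '' T`, and each class in `G` the preimage of a class in `G ⧸ ⟨s⟩`
  simp only [SetLike.setOf_exists_mem_eq_image, ← preimage_mk_setOf_eq_pow hs hs2]
  rw [hH, coe_closure_center_union_singleton hx2, Set.image_union, Set.image_image,
    Set.union_comm, Set.ncard_union_eq ?disjoint, Nat.add_sub_cancel,
    ← Set.image_image (QuotientGroup.mk ⁻¹' ·), Set.ncard_image_of_injective _ hmk_inj]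
  case disjoint =>
    refine Set.disjoint_left.mpr ?_
    rintro _ ⟨a, ha, rfl⟩ ⟨b, hb, hba⟩
    obtain ⟨r, -, hr⟩ : ((a * x : G) : G ⧸ zpowers s) ∈ HPow.hPow (b : G ⧸ zpowers s) '' T := by
      simp only at hba
      exact hba ▸ ⟨1, one_mem T, pow_one _⟩
    have hax : a * x ∈ center G := mem_center_of_mk_eq_mk (zpowers_le.mpr hs) (pow_mem hb r)
      (by rw [QuotientGroup.mk_pow, hr])
    exact hx (by simpa using mul_mem (inv_mem ha) hax)

/-- Let `G` be a finite group with commutator subgroup `{1, s}`, `s` central of order two,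
`x ∈ G` noncentral and `H = ⟨Z(G), x⟩`.  The `K`-classes are the orbits under the power
maps `g ↦ g^r` for `r` in a multiplicatively closed set `T` of odd exponents whose induced
relation is symmetric.  Then the number of `K`-classes of `G` consisting of conjugacy
classes of the form `{a·x, s·a·x}` with `a ∈ Z(G)` equals the number of `K`-classes of
`H/⟨s⟩` minus the number of `K`-classes of `Z(G)/⟨s⟩`. -/
theorem card_classes_involving_x {G : Type*} [Group G] [Finite G] (s : G)
    (hs : s ∈ Subgroup.center G) (hs1 : s ≠ 1)
    (hcomm : (commutator G : Set G) = {1, s})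
    (x : G) (hx : x ∉ Subgroup.center G)
    (H : Subgroup G) (hH : H = Subgroup.closure ((Subgroup.center G : Set G) ∪ {x}))
    (T : Submonoid ℕ)
    (hTodd : ∀ r ∈ T, Odd r)
    (hTsym : ∀ g : G, ∀ r ∈ T, ∃ r' ∈ T, (g ^ r) ^ r' = g)
    [hnorm : (Subgroup.zpowers s).Normal] :
    Set.ncard {S : Set G | ∃ a ∈ Subgroup.center G,
        S = {v | ∃ r ∈ T, v = (a * x) ^ r ∨ v = s * (a * x) ^ r}} =
      Set.ncard {S : Set (G ⧸ Subgroup.zpowers s) | ∃ h ∈ H,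
          S = {v | ∃ r ∈ T, v = (QuotientGroup.mk h : G ⧸ Subgroup.zpowers s) ^ r}} -
        Set.ncard {S : Set (G ⧸ Subgroup.zpowers s) | ∃ a ∈ Subgroup.center G,
          S = {v | ∃ r ∈ T, v = (QuotientGroup.mk a : G ⧸ Subgroup.zpowers s) ^ r}} :=
  card_classes_involving_x_general s hs hcomm x hx H hH T (hnorm := hnorm)
end
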